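/- arXiv:1601.05283 — 5 statements merged into one kernel-verified Lean document; each statement's English description precedes it below -/
import Mathlib

section
/- For any social network (𝒜, w, λ, θ), any set A ⊆ 𝒜, any n ≥ 0, and any two spending functions s₁ and s₂, one has Aⁿ_{s₁} ⊆ Aⁿ_{s₁ ⊕_λ s₂}. -/
open scoped BigOperators Classical

/-- A social network on a (finite) set of agents: influence weights `w` (non-negative),
propensity `lam` and threshold `thr`. -/
structure SocialNetwork (Agent : Type) where
  w : Agent → Agent → ℝ
  w_nonneg : ∀ a b, 0 ≤ w a b
  lam : Agent → ℝ
  thr : Agent → ℝ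

/-- A spending function maps each agent to a non-negative real. -/
def IsSpending {Agent : Type} (s : Agent → ℝ) : Prop := ∀ a, 0 ≤ s a

/-- The diffusion chain `Aⁿ_s`: `A⁰_s = A` and
`Aⁿ⁺¹_s = Aⁿ_s ∪ { b : λ(b)·s(b) + Σ_{a∈Aⁿ_s} w(a,b) ≥ θ(b) }`. -/
noncomputable def diffuse {Agent : Type} [Fintype Agent] (N : SocialNetwork Agent)
    (s : Agent → ℝ) (A : Set Agent) : ℕ → Set Agent
  | 0 => A
  | n + 1 =>
      diffuse N s A n ∪
        {b : Agent |
          N.lam b * s b +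
              ∑ a ∈ Finset.univ.filter (fun a => a ∈ diffuse N s A n), N.w a b ≥
            N.thr b}

/-- `A*_s = ⋃_{n ≥ 0} Aⁿ_s`. -/
noncomputable def diffuseStar {Agent : Type} [Fintype Agent] (N : SocialNetwork Agent)
    (s : Agent → ℝ) (A : Set Agent) : Set Agent :=
  ⋃ n : ℕ, diffuse N s A n

/-- `‖s‖ = Σ_{a ∈ 𝒜} s(a)`. -/
noncomputable def budget {Agent : Type} [Fintype Agent] (s : Agent → ℝ) : ℝ :=
  ∑ a, s a

/-- The combination `s₁ ⊕_λ s₂` of two spending functions. -/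
noncomputable def oplus {Agent : Type} (lam : Agent → ℝ) (s₁ s₂ : Agent → ℝ) :
    Agent → ℝ :=
  fun a => if 0 ≤ lam a then s₁ a + s₂ a else 0

/-- Lemma 5: `Aⁿ_{s₁} ⊆ Aⁿ_{s₁ ⊕_λ s₂}`. -/
theorem diffuse_subset_oplus {Agent : Type} [Fintype Agent] (N : SocialNetwork Agent)
    (s₁ s₂ : Agent → ℝ) (hs₁ : IsSpending s₁) (hs₂ : IsSpending s₂)
    (A : Set Agent) (n : ℕ) :
    diffuse N s₁ A n ⊆ diffuse N (oplus N.lam s₁ s₂) A n := by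
  induction n with
  | zero => exact subset_rfl
  | succ n ih =>
    intro b hb
    have hlam : N.lam b * s₁ b ≤ N.lam b * oplus N.lam s₁ s₂ b := by
      unfold oplus
      by_cases h : 0 ≤ N.lam b
      · simp only [h, if_true]
        nlinarith [hs₂ b]
      · simp only [h, if_false, mul_zero]
        nlinarith [hs₁ b, lt_of_not_ge h]
    have hsum : ∑ a ∈ Finset.univ.filter (fun a => a ∈ diffuse N s₁ A n), N.w a b ≤
        ∑ a ∈ Finset.univ.filter (fun a => a ∈ diffuse N (oplus N.lam s₁ s₂) A n), N.w a b := by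
      apply Finset.sum_le_sum_of_subset_of_nonneg
      · intro a ha
        simp only [Finset.mem_filter] at *
        exact ⟨ha.1, ih ha.2⟩
      · intro a _ _; exact N.w_nonneg a b
    rcases hb with hb | hb
    · exact Or.inl (ih hb)
    · exact Or.inr (le_trans hb.out (add_le_add hlam hsum))
end

section
/- For any social network (𝒜, w, λ, θ), any set A ⊆ 𝒜, and any two spending functions s₁ and s₂, one has (A*_{s₁})*_{s₂} ⊆ A*_{s₁ ⊕_λ s₂}. -/
open scoped BigOperators Classical

lemma diffuse_mono_n {Agent : Type} [Fintype Agent] (N : SocialNetwork Agent)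
    (s : Agent → ℝ) (A : Set Agent) : Monotone (diffuse N s A) := by
  apply monotone_nat_of_le_succ
  intro n
  exact Set.subset_union_left

lemma diffuseStar_closed {Agent : Type} [Fintype Agent] (N : SocialNetwork Agent)
    (s t : Agent → ℝ) (h : ∀ b, N.lam b * s b ≤ N.lam b * t b)
    (A B : Set Agent) (hB : B ⊆ diffuseStar N t A) :
    diffuseStar N s B ⊆ diffuseStar N t A := by
  intro x hx
  obtain ⟨n, hn⟩ : ∃ n, x ∈ diffuse N s B n := Set.mem_iUnion.mp hx
  clear hx
  induction n generalizing x with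
  | zero => exact hB hn
  | succ n ih =>
    rcases hn with hn | hn
    · exact ih hn
    · -- find m with diffuse N s B n ⊆ diffuse N t A m
      set g : Agent → ℕ := fun a => if h : ∃ m, a ∈ diffuse N t A m then h.choose else 0
        with hg
      set m : ℕ := Finset.univ.sup g with hm
      have hsub : diffuse N s B n ⊆ diffuse N t A m := by
        intro a ha
        have hstar : a ∈ diffuseStar N t A := ih ha
        have hex : ∃ k, a ∈ diffuse N t A k := Set.mem_iUnion.mp hstar
        have h1 : a ∈ diffuse N t A (g a) := by
          simp only [hg, dif_pos hex]
          exact hex.choose_spec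
        exact diffuse_mono_n N t A (Finset.le_sup (Finset.mem_univ a)) h1
      have hsum : (∑ a ∈ Finset.univ.filter (fun a => a ∈ diffuse N s B n), N.w a x)
          ≤ ∑ a ∈ Finset.univ.filter (fun a => a ∈ diffuse N t A m), N.w a x := by
        apply Finset.sum_le_sum_of_subset_of_nonneg
        · intro a ha
          simp only [Finset.mem_filter, Finset.mem_univ, true_and] at ha ⊢
          exact hsub ha
        · intro a _ _
          exact N.w_nonneg a x
      have hx' : x ∈ diffuse N t A (m + 1) := by
        right
        have : N.thr x ≤ N.lam x * t x +
            ∑ a ∈ Finset.univ.filter (fun a => a ∈ diffuse N t A m), N.w a x :=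
          le_trans hn (add_le_add (h x) hsum)
        exact this
      exact Set.mem_iUnion.mpr ⟨m + 1, hx'⟩

/-- Lemma 6: `(A*_{s₁})*_{s₂} ⊆ A*_{s₁ ⊕_λ s₂}`. -/
theorem diffuseStar_diffuseStar_subset {Agent : Type} [Fintype Agent]
    (N : SocialNetwork Agent) (s₁ s₂ : Agent → ℝ)
    (hs₁ : IsSpending s₁) (hs₂ : IsSpending s₂) (A : Set Agent) :
    diffuseStar N s₂ (diffuseStar N s₁ A) ⊆ diffuseStar N (oplus N.lam s₁ s₂) A := by
  have h1 : ∀ b, N.lam b * s₁ b ≤ N.lam b * oplus N.lam s₁ s₂ b := by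
    intro b
    unfold oplus
    by_cases hb : 0 ≤ N.lam b
    · simp only [if_pos hb]
      exact mul_le_mul_of_nonneg_left (le_add_of_nonneg_right (hs₂ b)) hb
    · simp only [if_neg hb, mul_zero]
      exact mul_nonpos_of_nonpos_of_nonneg (le_of_not_ge hb) (hs₁ b)
  have h2 : ∀ b, N.lam b * s₂ b ≤ N.lam b * oplus N.lam s₁ s₂ b := by
    intro b
    unfold oplus
    by_cases hb : 0 ≤ N.lam b
    · simp only [if_pos hb]
      exact mul_le_mul_of_nonneg_left (le_add_of_nonneg_left (hs₁ b)) hb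
    · simp only [if_neg hb, mul_zero]
      exact mul_nonpos_of_nonpos_of_nonneg (le_of_not_ge hb) (hs₂ b)
  exact diffuseStar_closed N s₂ (oplus N.lam s₁ s₂) h2 A (diffuseStar N s₁ A)
    (diffuseStar_closed N s₁ (oplus N.lam s₁ s₂) h1 A A
      (fun x hx => Set.mem_iUnion.mpr ⟨0, hx⟩))
end

section
/- (Soundness of Augmentation for promotional marketing) For each social network N = (𝒜, w, λ, θ), each non-negative real p, and all subsets A, B, and C of 𝒜: if N ⊨ A ▷_p B under the promotional semantics, then N ⊨ A∪C ▷_p B∪C under the promotional semantics. -/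
open scoped BigOperators Classical

/-- Promotional semantics of the atom `A ▷_p B`: there is a marketing campaign with
budget at most `p` that guarantees that `A` influences `B`. -/
def PromoSat {Agent : Type} [Fintype Agent] (N : SocialNetwork Agent)
    (A : Set Agent) (p : ℝ) (B : Set Agent) : Prop :=
  ∃ s : Agent → ℝ, IsSpending s ∧ budget s ≤ p ∧ B ⊆ diffuseStar N s A

/-- Preventive semantics of the atom `A ▷_p B`: for every marketing campaign with
budget at most `p`, the set `A` influences the set `B`. -/
def PrevSat {Agent : Type} [Fintype Agent] (N : SocialNetwork Agent)
    (A : Set Agent) (p : ℝ) (B : Set Agent) : Prop :=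
  ∀ s : Agent → ℝ, IsSpending s → budget s ≤ p → B ⊆ diffuseStar N s A

lemma diffuse_mono {Agent : Type} [Fintype Agent] (N : SocialNetwork Agent)
    (s : Agent → ℝ) {A A' : Set Agent} (hAA : A ⊆ A') :
    ∀ n, diffuse N s A n ⊆ diffuse N s A' n := by
  intro n
  induction n with
  | zero => exact hAA
  | succ n ih =>
    intro b hb
    rcases hb with hb | hb
    · exact Or.inl (ih hb)
    · right
      show N.thr b ≤ _
      have hsum : ∑ a ∈ Finset.univ.filter (fun a => a ∈ diffuse N s A n), N.w a b ≤
          ∑ a ∈ Finset.univ.filter (fun a => a ∈ diffuse N s A' n), N.w a b :=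
        Finset.sum_le_sum_of_subset_of_nonneg
          (by intro a ha; rw [Finset.mem_filter] at ha ⊢; exact ⟨ha.1, ih ha.2⟩)
          (fun a _ _ => N.w_nonneg a b)
      have hb' : N.thr b ≤ N.lam b * s b +
          ∑ a ∈ Finset.univ.filter (fun a => a ∈ diffuse N s A n), N.w a b := hb
      linarith

/-- Soundness of Augmentation for promotional marketing:
if `N ⊨ A ▷_p B` then `N ⊨ A∪C ▷_p B∪C`. -/
theorem promo_augmentation_sound {Agent : Type} [Fintype Agent] (N : SocialNetwork Agent)
    (p : ℝ) (hp : 0 ≤ p) (A B C : Set Agent) (h : PromoSat N A p B) :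
    PromoSat N (A ∪ C) p (B ∪ C) := by
  obtain ⟨s, hs, hb, hBs⟩ := h
  refine ⟨s, hs, hb, ?_⟩
  intro x hx
  rcases hx with hx | hx
  · obtain ⟨T, ⟨n, rfl⟩, hxT⟩ := hBs hx
    exact Set.mem_iUnion.2 ⟨n, diffuse_mono N s Set.subset_union_left n hxT⟩
  · exact Set.mem_iUnion.2 ⟨0, Or.inr hx⟩
end

section
/- (Completeness of the logic of promotional marketing) For any finite set 𝒜₀ and any formula φ ∈ Φ(𝒜₀): if φ is not derivable in the promotional proof system (⊬ φ), then there exists a social network N = (𝒜, w, λ, θ) with 𝒜₀ ⊆ 𝒜 (so that φ ∈ Φ(𝒜)) such that N ⊭ φ under the promotional semantics. -/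
open scoped BigOperators Classical

/-- The language `Φ(𝒜)`: atoms `A ▷_p B` (with `A B ⊆ 𝒜` and `p` a non-negative real),
closed under negation and implication. -/
inductive Formula (Agent : Type) : Type where
  | atom : Set Agent → NNReal → Set Agent → Formula Agent
  | neg : Formula Agent → Formula Agent
  | imp : Formula Agent → Formula Agent → Formula Agent

/-- Evaluation of a formula under a propositional valuation of its atoms. -/
def evalWith {Agent : Type} (v : Set Agent → NNReal → Set Agent → Prop) :
    Formula Agent → Prop
  | .atom A p B => v A p B
  | .neg φ => ¬ evalWith v φ
  | .imp φ ψ => evalWith v φ → evalWith v ψ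

/-- A propositional tautology in the language `Φ(𝒜)`. -/
def Tautology {Agent : Type} (φ : Formula Agent) : Prop :=
  ∀ v : Set Agent → NNReal → Set Agent → Prop, evalWith v φ

/-- Promotional satisfaction relation `N ⊨ φ`. -/
def PromoSatisfies {Agent : Type} [Fintype Agent] (N : SocialNetwork Agent) :
    Formula Agent → Prop
  | .atom A p B =>
      ∃ s : Agent → ℝ, IsSpending s ∧ budget s ≤ (p : ℝ) ∧ B ⊆ diffuseStar N s A
  | .neg φ => ¬ PromoSatisfies N φ
  | .imp φ ψ => PromoSatisfies N φ → PromoSatisfies N ψ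

/-- Preventive satisfaction relation `N ⊨ φ`. -/
def PrevSatisfies {Agent : Type} [Fintype Agent] (N : SocialNetwork Agent) :
    Formula Agent → Prop
  | .atom A p B =>
      ∀ s : Agent → ℝ, IsSpending s → budget s ≤ (p : ℝ) → B ⊆ diffuseStar N s A
  | .neg φ => ¬ PrevSatisfies N φ
  | .imp φ ψ => PrevSatisfies N φ → PrevSatisfies N ψ

/-- Derivability `⊢ φ` in the proof system for promotional marketing:
propositional tautologies, Reflexivity, Augmentation, Transitivity, Modus Ponens. -/
inductive PromoDeriv {Agent : Type} : Formula Agent → Prop where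
  | taut {φ : Formula Agent} : Tautology φ → PromoDeriv φ
  | refl {A B : Set Agent} (p : NNReal) (h : B ⊆ A) : PromoDeriv (.atom A p B)
  | aug (A B C : Set Agent) (p : NNReal) :
      PromoDeriv (.imp (.atom A p B) (.atom (A ∪ C) p (B ∪ C)))
  | trans (A B C : Set Agent) (p q : NNReal) :
      PromoDeriv (.imp (.atom A p B) (.imp (.atom B q C) (.atom A (p + q) C)))
  | mp {φ ψ : Formula Agent} : PromoDeriv (.imp φ ψ) → PromoDeriv φ → PromoDeriv ψ

/-- Derivability `⊢ φ` in the proof system for preventive marketing: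
propositional tautologies, Reflexivity, Augmentation, Transitivity, Monotonicity,
Modus Ponens. -/
inductive PrevDeriv {Agent : Type} : Formula Agent → Prop where
  | taut {φ : Formula Agent} : Tautology φ → PrevDeriv φ
  | refl {A B : Set Agent} (p : NNReal) (h : B ⊆ A) : PrevDeriv (.atom A p B)
  | aug (A B C : Set Agent) (p : NNReal) :
      PrevDeriv (.imp (.atom A p B) (.atom (A ∪ C) p (B ∪ C)))
  | trans (A B C : Set Agent) (p : NNReal) :
      PrevDeriv (.imp (.atom A p B) (.imp (.atom B p C) (.atom A p C)))
  | mono (A B : Set Agent) {p q : NNReal} (h : q ≤ p) :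
      PrevDeriv (.imp (.atom A p B) (.atom A q B))
  | mp {φ ψ : Formula Agent} : PrevDeriv (.imp φ ψ) → PrevDeriv φ → PrevDeriv ψ

/-- Transport of a formula along a map of agents (inclusion of `𝒜₀` into `𝒜`). -/
def Formula.map {α β : Type} (f : α → β) : Formula α → Formula β
  | .atom A p B => .atom (f '' A) p (f '' B)
  | .neg φ => .neg (Formula.map f φ)
  | .imp φ ψ => .imp (Formula.map f φ) (Formula.map f ψ)

section ProofTheory

variable {α : Type}

/-- Derivability from a set of hypotheses. -/
inductive DerivFrom (Γ : Set (Formula α)) : Formula α → Prop where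
  | ax {ψ : Formula α} : PromoDeriv ψ → DerivFrom Γ ψ
  | mem {ψ : Formula α} : ψ ∈ Γ → DerivFrom Γ ψ
  | mp {ψ χ : Formula α} : DerivFrom Γ (.imp ψ χ) → DerivFrom Γ ψ → DerivFrom Γ χ

lemma DerivFrom.mono {Γ Δ : Set (Formula α)} (h : Γ ⊆ Δ) {ψ : Formula α}
    (d : DerivFrom Γ ψ) : DerivFrom Δ ψ := by
  induction d with
  | ax h' => exact .ax h'
  | mem h' => exact .mem (h h')
  | mp _ _ ih1 ih2 => exact .mp ih1 ih2

lemma derivFrom_empty {ψ : Formula α} (d : DerivFrom (∅ : Set (Formula α)) ψ) :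
    PromoDeriv ψ := by
  induction d with
  | ax h' => exact h'
  | mem h' => exact absurd h' (Set.notMem_empty _)
  | mp _ _ ih1 ih2 => exact .mp ih1 ih2

lemma taut1 (ψ χ : Formula α) : PromoDeriv (Formula.imp χ (Formula.imp ψ χ)) :=
  .taut (fun v => by simp only [evalWith]; tauto)

lemma tautId (ψ : Formula α) : PromoDeriv (Formula.imp ψ ψ) :=
  .taut (fun v => by simp only [evalWith]; tauto)

lemma tautS (ψ a χ : Formula α) :
    PromoDeriv (Formula.imp (.imp ψ (.imp a χ)) (.imp (.imp ψ a) (.imp ψ χ))) :=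
  .taut (fun v => by simp only [evalWith]; tauto)

/-- Deduction theorem. -/
lemma deduction {Γ : Set (Formula α)} {ψ χ : Formula α}
    (d : DerivFrom (Γ ∪ {ψ}) χ) : DerivFrom Γ (.imp ψ χ) := by
  induction d with
  | @ax χ h => exact .mp (.ax (taut1 ψ χ)) (.ax h)
  | @mem χ h =>
      rcases h with h | h
      · exact .mp (.ax (taut1 ψ χ)) (.mem h)
      · rcases h with rfl; exact .ax (tautId χ)
  | @mp a χ _ _ ih1 ih2 => exact .mp (.mp (.ax (tautS ψ a χ)) ih1) ih2

lemma derivFrom_chain {C : Set (Set (Formula α))} (hC : IsChain (· ⊆ ·) C)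
    (hne : C.Nonempty) {ψ : Formula α} (d : DerivFrom (⋃₀ C) ψ) :
    ∃ Δ ∈ C, DerivFrom Δ ψ := by
  induction d with
  | @ax χ h => exact ⟨hne.choose, hne.choose_spec, .ax h⟩
  | @mem χ h => rcases h with ⟨Δ, hΔ, hm⟩; exact ⟨Δ, hΔ, .mem hm⟩
  | mp _ _ ih1 ih2 =>
      rcases ih1 with ⟨Δ₁, hΔ₁, d1⟩
      rcases ih2 with ⟨Δ₂, hΔ₂, d2⟩
      rcases hC.total hΔ₁ hΔ₂ with h | h
      · exact ⟨Δ₂, hΔ₂, .mp (d1.mono h) d2⟩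
      · exact ⟨Δ₁, hΔ₁, .mp d1 (d2.mono h)⟩

/-- Lindenbaum: a maximal set containing `¬φ` from which `φ` is not derivable. -/
lemma lindenbaum {φ : Formula α} (h : ¬ PromoDeriv φ) :
    ∃ Γ : Set (Formula α), Formula.neg φ ∈ Γ ∧ ¬ DerivFrom Γ φ ∧
      ∀ ψ, ψ ∉ Γ → DerivFrom (Γ ∪ {ψ}) φ := by
  set S : Set (Set (Formula α)) := {Δ | Formula.neg φ ∈ Δ ∧ ¬ DerivFrom Δ φ} with hS
  have hbase : ({Formula.neg φ} : Set (Formula α)) ∈ S := by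
    refine ⟨rfl, fun d => ?_⟩
    have d' : DerivFrom ((∅ : Set (Formula α)) ∪ {Formula.neg φ}) φ := d.mono (by simp)
    have hded : DerivFrom (∅ : Set (Formula α)) φ :=
      .mp (.ax (.taut (φ := Formula.imp (.imp (.neg φ) φ) φ)
        (fun v => by simp only [evalWith]; tauto))) (deduction d')
    exact h (derivFrom_empty hded)
  have hz : ∀ c ⊆ S, IsChain (· ⊆ ·) c → c.Nonempty →
      ∃ ub ∈ S, ∀ s ∈ c, s ⊆ ub := by
    intro c hc hchain hne
    refine ⟨⋃₀ c, ⟨?_, ?_⟩, fun s hs => Set.subset_sUnion_of_mem hs⟩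
    · rcases hne with ⟨Δ, hΔ⟩
      exact Set.mem_of_mem_of_subset (hc hΔ).1 (Set.subset_sUnion_of_mem hΔ)
    · intro d
      rcases derivFrom_chain hchain hne d with ⟨Δ, hΔ, dΔ⟩
      exact (hc hΔ).2 dΔ
  rcases zorn_subset_nonempty S hz _ hbase with ⟨Γ, hsub, hmax⟩
  refine ⟨Γ, hsub (rfl), hmax.prop.2, fun ψ hψ => ?_⟩
  -- if Γ ∪ {ψ} were consistent it would contradict maximality
  by_contra hnd
  have : (Γ ∪ {ψ}) ∈ S := ⟨Or.inl (hsub rfl), hnd⟩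
  have := hmax.eq_of_subset this Set.subset_union_left
  exact hψ (this ▸ Or.inr rfl : ψ ∈ Γ)

-- Properties of the maximal set produced by `lindenbaum`.
section MaxSet

variable {φ : Formula α} {Γ : Set (Formula α)}
  (hmem : Formula.neg φ ∈ Γ) (hcons : ¬ DerivFrom Γ φ)
  (hmax : ∀ ψ, ψ ∉ Γ → DerivFrom (Γ ∪ {ψ}) φ)

include hcons hmax in
lemma max_closed {ψ : Formula α} (d : DerivFrom Γ ψ) : ψ ∈ Γ := by
  by_contra hψ
  exact hcons (.mp (deduction (hmax ψ hψ)) d)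

include hmem hcons hmax in
lemma max_neg_iff {ψ : Formula α} : Formula.neg ψ ∈ Γ ↔ ψ ∉ Γ := by
  constructor
  · intro hn hψ
    refine hcons (.mp (.mp (.ax (.taut (φ := Formula.imp ψ (.imp (.neg ψ) φ))
      (fun v => by simp only [evalWith]; tauto))) (.mem hψ)) (.mem hn))
  · intro hψ
    have d1 : DerivFrom Γ (.imp ψ φ) := deduction (hmax ψ hψ)
    refine max_closed hcons hmax (.mp (.mp (.ax (.taut
      (φ := Formula.imp (.imp ψ φ) (.imp (.neg φ) (.neg ψ)))
      (fun v => by simp only [evalWith]; tauto))) d1) (.mem hmem))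

include hmem hcons hmax in
lemma max_imp_iff {ψ χ : Formula α} :
    Formula.imp ψ χ ∈ Γ ↔ (ψ ∈ Γ → χ ∈ Γ) := by
  constructor
  · intro hi hψ
    exact max_closed hcons hmax (.mp (.mem hi) (.mem hψ))
  · intro hi
    by_cases hψ : ψ ∈ Γ
    · exact max_closed hcons hmax
        (.mp (.ax (taut1 ψ χ)) (.mem (hi hψ)))
    · have hn : Formula.neg ψ ∈ Γ := (max_neg_iff hmem hcons hmax).2 hψ
      exact max_closed hcons hmax
        (.mp (.ax (.taut (φ := Formula.imp (.neg ψ) (.imp ψ χ))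
          (fun v => by simp only [evalWith]; tauto))) (.mem hn))

end MaxSet

end ProofTheory
section Canonical

variable {α : Type} [Fintype α]

/-- The list of atoms occurring in a formula. -/
def atomsOf : Formula α → List (Set α × NNReal × Set α)
  | .atom A p B => [(A, p, B)]
  | .neg ψ => atomsOf ψ
  | .imp ψ χ => atomsOf ψ ++ atomsOf χ

noncomputable section

variable (L : List (Set α × NNReal × Set α)) (Γ : Set (Formula α))

/-- A bound larger than every budget appearing in `L`. -/
def bigK : ℝ := 1 + (L.map fun t => ((t.2.1 : NNReal) : ℝ)).sum

lemma one_le_bigK : 1 ≤ bigK L := by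
  have : (0:ℝ) ≤ (L.map fun t => ((t.2.1 : NNReal) : ℝ)).sum := by
    apply List.sum_nonneg
    intro x hx
    rcases List.mem_map.1 hx with ⟨t, _, rfl⟩
    positivity
  simp [bigK]; linarith

lemma budget_le_bigK {t : Set α × NNReal × Set α} (ht : t ∈ L) :
    (t.2.1 : ℝ) ≤ bigK L - 1 := by
  have hm : ((t.2.1 : NNReal) : ℝ) ∈ L.map fun t => ((t.2.1 : NNReal) : ℝ) :=
    List.mem_map.2 ⟨t, ht, rfl⟩
  have := List.single_le_sum (l := L.map fun t => ((t.2.1 : NNReal) : ℝ))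
    (fun x hx => by rcases List.mem_map.1 hx with ⟨u, _, rfl⟩; positivity) _ hm
  simp only [bigK]; linarith

/-- Whether gadget `i` is "live", i.e. its atom belongs to `Γ`. -/
def live (i : Fin L.length) : Prop :=
  Formula.atom (L.get i).1 (L.get i).2.1 (L.get i).2.2 ∈ Γ

/-- Cardinality of a set of agents. -/
def cardOf (A : Set α) : ℕ := (Finset.univ.filter (· ∈ A)).card

/-- The canonical network. -/
def canonN : SocialNetwork (α ⊕ Fin L.length) where
  w x y :=
    match x, y with
    | Sum.inl a, Sum.inr i => if live L Γ i ∧ a ∈ (L.get i).1 then bigK L else 0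
    | Sum.inr i, Sum.inl b => if live L Γ i ∧ b ∈ (L.get i).2.2 then 1 else 0
    | _, _ => 0
  w_nonneg := by
    rintro (a | i) (b | j) <;> simp only <;>
      first
        | (split <;> first | linarith [one_le_bigK L] | norm_num)
        | norm_num
  lam := Sum.elim (fun _ => 0) (fun i => if live L Γ i then 1 else 0)
  thr := Sum.elim (fun _ => 1)
    (fun i => if live L Γ i then ((L.get i).2.1 : ℝ) + bigK L * cardOf (L.get i).1 else 1)

end

end Canonical
section DiffusionLemmas

variable {β : Type} [Fintype β]

lemma diffuse_succ (N : SocialNetwork β) (s : β → ℝ) (A : Set β) (n : ℕ) :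
    diffuse N s A (n + 1) = diffuse N s A n ∪
      {b : β | N.lam b * s b +
          ∑ a ∈ Finset.univ.filter (fun a => a ∈ diffuse N s A n), N.w a b ≥ N.thr b} :=
  rfl

lemma diffuse_mono_s17 (N : SocialNetwork β) (s : β → ℝ) (A : Set β) {m n : ℕ}
    (h : m ≤ n) : diffuse N s A m ⊆ diffuse N s A n := by
  induction n, h using Nat.le_induction with
  | base => exact subset_rfl
  | succ n _ ih => exact ih.trans (by rw [diffuse_succ]; exact Set.subset_union_left)

lemma single_le_budget (s : β → ℝ) (hs : IsSpending s) (x : β) : s x ≤ budget s :=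
  Finset.single_le_sum (fun i _ => hs i) (Finset.mem_univ x)

end DiffusionLemmas
section CanonLemmas

variable {α : Type} [Fintype α]
variable (L : List (Set α × NNReal × Set α)) (Γ : Set (Formula α))

lemma sum_into_gadget (D : Set (α ⊕ Fin L.length)) (i : Fin L.length) :
    ∑ a ∈ Finset.univ.filter (fun a => a ∈ D), (canonN L Γ).w a (Sum.inr i) =
      if live L Γ i then
        bigK L * ((Finset.univ.filter
          (fun a : α => a ∈ (L.get i).1 ∧ Sum.inl a ∈ D)).card : ℝ)
      else 0 := by
  rw [Finset.sum_filter, Fintype.sum_sum_type]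
  have h2 : ∑ j : Fin L.length,
      (if (Sum.inr j : α ⊕ Fin L.length) ∈ D then (canonN L Γ).w (Sum.inr j) (Sum.inr i) else 0) = 0 := by
    apply Finset.sum_eq_zero
    intro j _
    have : (canonN L Γ).w (Sum.inr j) (Sum.inr i) = 0 := rfl
    rw [this]; simp
  rw [h2, add_zero]
  by_cases hl : live L Γ i
  · rw [if_pos hl]
    have : ∀ a : α, (if (Sum.inl a : α ⊕ Fin L.length) ∈ D then (canonN L Γ).w (Sum.inl a) (Sum.inr i) else 0) =
        if (a ∈ (L.get i).1 ∧ (Sum.inl a : α ⊕ Fin L.length) ∈ D) then bigK L else 0 := by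
      intro a
      have hw : (canonN L Γ).w (Sum.inl a) (Sum.inr i) =
          if live L Γ i ∧ a ∈ (L.get i).1 then bigK L else 0 := rfl
      by_cases hD : (Sum.inl a : α ⊕ Fin L.length) ∈ D <;>
        by_cases hA : a ∈ (L.get i).1 <;>
        simp [hD, hA, hw, hl]
    simp only [this]
    rw [← Finset.sum_filter, Finset.sum_const, nsmul_eq_mul, mul_comm]
  · rw [if_neg hl]
    apply Finset.sum_eq_zero
    intro a _
    have hw : (canonN L Γ).w (Sum.inl a) (Sum.inr i) =
        if live L Γ i ∧ a ∈ (L.get i).1 then bigK L else 0 := rfl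
    simp [hw, hl]

lemma gadget_live_of_mem {s : (α ⊕ Fin L.length) → ℝ} {A : Set α} {n : ℕ} {i : Fin L.length}
    (h : Sum.inr i ∈ diffuse (canonN L Γ) s (Sum.inl '' A) n) : live L Γ i := by
  induction n with
  | zero => simp [diffuse] at h
  | succ n ih =>
      rw [diffuse_succ] at h
      rcases h with h | h
      · exact ih h
      · by_contra hl
        have hlam : (canonN L Γ).lam (Sum.inr i) = 0 := by
          simp [canonN, hl]
        have hthr : (canonN L Γ).thr (Sum.inr i) = 1 := by
          simp [canonN, hl]
        have hsum := sum_into_gadget L Γ (diffuse (canonN L Γ) s (Sum.inl '' A) n) i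
        rw [if_neg hl] at hsum
        simp only [Set.mem_setOf_eq, hlam, hthr, hsum, zero_mul, zero_add] at h
        linarith

lemma gadget_step {s : (α ⊕ Fin L.length) → ℝ} {A : Set α} {n : ℕ} {i : Fin L.length}
    (hs : IsSpending s) (hb : budget s ≤ bigK L - 1)
    (h : Sum.inr i ∈ diffuse (canonN L Γ) s (Sum.inl '' A) (n + 1)) :
    Sum.inr i ∈ diffuse (canonN L Γ) s (Sum.inl '' A) n ∨
      (live L Γ i ∧
        (L.get i).1 ⊆ {a : α | Sum.inl a ∈ diffuse (canonN L Γ) s (Sum.inl '' A) n} ∧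
        ((L.get i).2.1 : ℝ) ≤ s (Sum.inr i)) := by
  have hl : live L Γ i := gadget_live_of_mem L Γ h
  rw [diffuse_succ] at h
  rcases h with h | h
  · exact Or.inl h
  right
  refine ⟨hl, ?_⟩
  have hlam : (canonN L Γ).lam (Sum.inr i) = 1 := by simp [canonN, hl]
  have hthr : (canonN L Γ).thr (Sum.inr i) =
      ((L.get i).2.1 : ℝ) + bigK L * cardOf (L.get i).1 := by simp [canonN, hl]
  have hsum := sum_into_gadget L Γ (diffuse (canonN L Γ) s (Sum.inl '' A) n) i
  rw [if_pos hl] at hsum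
  simp only [Set.mem_setOf_eq, hlam, hthr, hsum, one_mul] at h
  set D := diffuse (canonN L Γ) s (Sum.inl '' A) n with hD
  set c := (Finset.univ.filter (fun a : α => a ∈ (L.get i).1 ∧ Sum.inl a ∈ D)).card with hc
  have hK1 : (1:ℝ) ≤ bigK L := one_le_bigK L
  by_cases hsub : (L.get i).1 ⊆ {a : α | Sum.inl a ∈ D}
  · refine ⟨hsub, ?_⟩
    have hceq : c = cardOf (L.get i).1 := by
      rw [hc, cardOf]
      congr 1
      apply Finset.filter_congr
      intro a _
      constructor
      · exact fun h' => h'.1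
      · exact fun h' => ⟨h', hsub h'⟩
    rw [hceq] at h
    linarith
  · exfalso
    rcases Set.not_subset.1 hsub with ⟨a₀, ha₀, ha₀'⟩
    have hss : (Finset.univ.filter (fun a : α => a ∈ (L.get i).1 ∧ Sum.inl a ∈ D)) ⊂
        (Finset.univ.filter (· ∈ (L.get i).1)) := by
      constructor
      · intro a ha
        rcases Finset.mem_filter.1 ha with ⟨hu, hp⟩
        exact Finset.mem_filter.2 ⟨hu, hp.1⟩
      · intro hsub'
        have := hsub' (Finset.mem_filter.2 ⟨Finset.mem_univ a₀, ha₀⟩)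
        exact ha₀' (Finset.mem_filter.1 this).2.2
    have hclt : c < cardOf (L.get i).1 := Finset.card_lt_card hss
    have hcle : (c : ℝ) + 1 ≤ (cardOf (L.get i).1 : ℝ) := by exact_mod_cast hclt
    have hmul : bigK L * ((c : ℝ) + 1) ≤ bigK L * (cardOf (L.get i).1 : ℝ) :=
      mul_le_mul_of_nonneg_left hcle (by linarith)
    have hse : s (Sum.inr i) ≤ budget s := single_le_budget s hs _
    have hp : (0:ℝ) ≤ ((L.get i).2.1 : ℝ) := (L.get i).2.1.coe_nonneg
    nlinarith

lemma base_step {s : (α ⊕ Fin L.length) → ℝ} {A : Set α} {n : ℕ} {b : α}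
    (h : Sum.inl b ∈ diffuse (canonN L Γ) s (Sum.inl '' A) (n + 1)) :
    Sum.inl b ∈ diffuse (canonN L Γ) s (Sum.inl '' A) n ∨
      ∃ i : Fin L.length, live L Γ i ∧
        Sum.inr i ∈ diffuse (canonN L Γ) s (Sum.inl '' A) n ∧ b ∈ (L.get i).2.2 := by
  rw [diffuse_succ] at h
  rcases h with h | h
  · exact Or.inl h
  right
  by_contra hno
  push_neg at hno
  set D := diffuse (canonN L Γ) s (Sum.inl '' A) n with hD
  have hlam : (canonN L Γ).lam (Sum.inl b) = 0 := rfl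
  have hthr : (canonN L Γ).thr (Sum.inl b) = 1 := rfl
  have hsum : ∑ a ∈ Finset.univ.filter (fun a => a ∈ D), (canonN L Γ).w a (Sum.inl b) = 0 := by
    apply Finset.sum_eq_zero
    rintro (a | i) hx
    · rfl
    · have hiD : (Sum.inr i : α ⊕ Fin L.length) ∈ D := (Finset.mem_filter.1 hx).2
      have hw : (canonN L Γ).w (Sum.inr i) (Sum.inl b) =
          if live L Γ i ∧ b ∈ (L.get i).2.2 then 1 else 0 := rfl
      rw [hw, if_neg]
      rintro ⟨h1, h2⟩
      exact hno i h1 hiD h2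
  simp only [Set.mem_setOf_eq, hlam, hthr, hsum, zero_mul, zero_add] at h
  linarith

end CanonLemmas
section GammaClosure

variable {α : Type} {Γ : Set (Formula α)}
variable (hcl : ∀ ψ : Formula α, DerivFrom Γ ψ → ψ ∈ Γ)

include hcl

lemma G_refl {A B : Set α} (p : NNReal) (h : B ⊆ A) : Formula.atom A p B ∈ Γ :=
  hcl _ (.ax (.refl p h))

lemma G_trans {A B C : Set α} {p q : NNReal}
    (h1 : Formula.atom A p B ∈ Γ) (h2 : Formula.atom B q C ∈ Γ) :
    Formula.atom A (p + q) C ∈ Γ :=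
  hcl _ (.mp (.mp (.ax (.trans A B C p q)) (.mem h1)) (.mem h2))

lemma G_proj {A B C : Set α} {p : NNReal}
    (h1 : Formula.atom A p B ∈ Γ) (h : C ⊆ B) : Formula.atom A p C ∈ Γ := by
  have := G_trans hcl h1 (G_refl hcl 0 h)
  rwa [add_zero] at this

lemma G_mono {A B : Set α} {p q : NNReal}
    (h1 : Formula.atom A p B ∈ Γ) (h : p ≤ q) : Formula.atom A q B ∈ Γ := by
  have := G_trans hcl h1 (G_refl hcl (q - p) (subset_rfl : B ⊆ B))
  rwa [add_tsub_cancel_of_le h] at this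

lemma G_chain {A D A₁ B₁ : Set α} {q p₁ : NNReal}
    (hD : Formula.atom A q D ∈ Γ) (h1 : Formula.atom A₁ p₁ B₁ ∈ Γ) (hsub : A₁ ⊆ D) :
    Formula.atom A (q + p₁) (D ∪ B₁) ∈ Γ := by
  have haug : Formula.atom (A₁ ∪ D) p₁ (B₁ ∪ D) ∈ Γ :=
    hcl _ (.mp (.ax (.aug A₁ B₁ D p₁)) (.mem h1))
  rw [Set.union_eq_self_of_subset_left hsub] at haug
  rw [Set.union_comm D B₁]
  exact G_trans hcl hD (G_proj hcl haug (subset_rfl))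

lemma G_chain_finset {ι : Type} {A D : Set α} {q : NNReal}
    (F : Finset ι) (Ai Bi : ι → Set α) (pi : ι → NNReal)
    (hD : Formula.atom A q D ∈ Γ)
    (hA : ∀ i ∈ F, Ai i ⊆ D)
    (hatom : ∀ i ∈ F, Formula.atom (Ai i) (pi i) (Bi i) ∈ Γ) :
    Formula.atom A (q + ∑ i ∈ F, pi i) (D ∪ ⋃ i ∈ F, Bi i) ∈ Γ := by
  classical
  induction F using Finset.induction_on with
  | empty => simpa using hD
  | @insert j F hj ih =>
      have step := G_chain hcl (ih (fun i hi => hA i (Finset.mem_insert_of_mem hi))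
          (fun i hi => hatom i (Finset.mem_insert_of_mem hi)))
        (hatom j (Finset.mem_insert_self j F))
        ((hA j (Finset.mem_insert_self j F)).trans Set.subset_union_left)
      have hset : (D ∪ ⋃ i ∈ F, Bi i) ∪ Bi j = D ∪ ⋃ i ∈ insert j F, Bi i := by
        rw [Finset.set_biUnion_insert, Set.union_assoc,
          Set.union_comm (⋃ i ∈ F, Bi i) (Bi j)]
      have hq : q + ∑ i ∈ F, pi i + pi j = q + ∑ i ∈ insert j F, pi i := by
        rw [Finset.sum_insert hj]; ring
      rw [hset, hq] at step
      exact step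

end GammaClosure

section TruthLemma

variable {α : Type} [Fintype α]
variable (L : List (Set α × NNReal × Set α)) (Γ : Set (Formula α))

lemma canonN_sat {A B : Set α} {p : NNReal} (i : Fin L.length)
    (hL : L.get i = (A, p, B)) (hl : live L Γ i) :
    PromoSatisfies (canonN L Γ) (.atom (Sum.inl '' A) p (Sum.inl '' B)) := by
  classical
  set s : (α ⊕ Fin L.length) → ℝ :=
    fun x => if x = Sum.inr i then (p : ℝ) else 0 with hs_def
  have hsp : IsSpending s := by
    intro x; simp only [hs_def]; split <;> positivity
  have hbud : budget s = (p : ℝ) := by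
    simp only [budget, hs_def]
    rw [Finset.sum_ite_eq' Finset.univ (Sum.inr i) (fun _ => (p:ℝ))]
    simp
  refine ⟨s, hsp, le_of_eq hbud, ?_⟩
  have hAi : (L.get i).1 = A := by rw [hL]
  have hpi : (L.get i).2.1 = p := by rw [hL]
  have hBi : (L.get i).2.2 = B := by rw [hL]
  -- step 1 : the gadget i is activated
  have h1 : Sum.inr i ∈ diffuse (canonN L Γ) s (Sum.inl '' A) 1 := by
    rw [diffuse_succ]
    right
    have hlam : (canonN L Γ).lam (Sum.inr i) = 1 := by simp [canonN, hl]
    have hthr : (canonN L Γ).thr (Sum.inr i) =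
        ((L.get i).2.1 : ℝ) + bigK L * cardOf (L.get i).1 := by simp [canonN, hl]
    have hsum := sum_into_gadget L Γ (diffuse (canonN L Γ) s (Sum.inl '' A) 0) i
    rw [if_pos hl] at hsum
    have hfilter : (Finset.univ.filter (fun a : α => a ∈ (L.get i).1 ∧
        Sum.inl a ∈ diffuse (canonN L Γ) s (Sum.inl '' A) 0)).card = cardOf (L.get i).1 := by
      rw [cardOf]
      congr 1
      apply Finset.filter_congr
      intro a _
      constructor
      · exact fun h' => h'.1
      · intro h'
        refine ⟨h', ?_⟩
        show Sum.inl a ∈ Sum.inl '' A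
        exact ⟨a, by rw [← hAi]; exact h', rfl⟩
    simp only [Set.mem_setOf_eq, hlam, hthr, hsum, hfilter, one_mul]
    have : s (Sum.inr i) = (p : ℝ) := by simp [hs_def]
    rw [this, hpi]
  -- step 2 : all of B is activated
  intro x hx
  rcases hx with ⟨b, hb, rfl⟩
  refine Set.mem_iUnion.2 ⟨2, ?_⟩
  rw [diffuse_succ]
  right
  have hlam : (canonN L Γ).lam (Sum.inl b) = 0 := rfl
  have hthr : (canonN L Γ).thr (Sum.inl b) = 1 := rfl
  simp only [Set.mem_setOf_eq, hlam, hthr, zero_mul, zero_add]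
  have hmem : (Sum.inr i : α ⊕ Fin L.length) ∈
      Finset.univ.filter (fun a => a ∈ diffuse (canonN L Γ) s (Sum.inl '' A) 1) :=
    Finset.mem_filter.2 ⟨Finset.mem_univ _, h1⟩
  have hw : (canonN L Γ).w (Sum.inr i) (Sum.inl b) = 1 := by
    have : (canonN L Γ).w (Sum.inr i) (Sum.inl b) =
        if live L Γ i ∧ b ∈ (L.get i).2.2 then 1 else 0 := rfl
    rw [this, if_pos ⟨hl, by rw [hBi]; exact hb⟩]
  calc (1:ℝ) = (canonN L Γ).w (Sum.inr i) (Sum.inl b) := hw.symm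
    _ ≤ _ := Finset.single_le_sum (fun x _ => (canonN L Γ).w_nonneg x (Sum.inl b)) hmem

end TruthLemma
section Soundness

variable {α : Type} [Fintype α]
variable (L : List (Set α × NNReal × Set α)) (Γ : Set (Formula α))

lemma gadget_budget {s : (α ⊕ Fin L.length) → ℝ} {A : Set α}
    (hs : IsSpending s) (hb : budget s ≤ bigK L - 1) :
    ∀ n (i : Fin L.length), Sum.inr i ∈ diffuse (canonN L Γ) s (Sum.inl '' A) n →
      ((L.get i).2.1 : ℝ) ≤ s (Sum.inr i) := by
  intro n
  induction n with
  | zero => intro i hi; simp [diffuse] at hi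
  | succ n ih =>
      intro i hi
      rcases gadget_step L Γ hs hb hi with h | ⟨_, _, h⟩
      · exact ih i h
      · exact h

lemma canonN_sound (hcl : ∀ ψ : Formula α, DerivFrom Γ ψ → ψ ∈ Γ)
    {A' B' : Set α} {p' : NNReal} (hp' : (p' : ℝ) ≤ bigK L - 1)
    (hsat : PromoSatisfies (canonN L Γ) (.atom (Sum.inl '' A') p' (Sum.inl '' B'))) :
    Formula.atom A' p' B' ∈ Γ := by
  classical
  obtain ⟨s, hs, hb, hsub⟩ := hsat
  have hb' : budget s ≤ bigK L - 1 := hb.trans hp'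
  set Ns := canonN L Γ with hNs
  set I : Set (α ⊕ Fin L.length) := Sum.inl '' A' with hI
  set base : ℕ → Set α := fun n => {a : α | Sum.inl a ∈ diffuse Ns s I n} with hbase
  set E : ℕ → Finset (Fin L.length) :=
    fun n => Finset.univ.filter (fun i => Sum.inr i ∈ diffuse Ns s I n) with hE
  -- main induction
  have main : ∀ n : ℕ, Formula.atom A' (∑ i ∈ E n, (L.get i).2.1)
      (base n ∪ ⋃ i ∈ E n, (L.get i).2.2) ∈ Γ := by
    intro n
    induction n with
    | zero =>
        have hE0 : E 0 = ∅ := by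
          apply Finset.eq_empty_of_forall_notMem
          intro i hi
          have := (Finset.mem_filter.1 hi).2
          simp [diffuse, hI] at this
        have hbase0 : base 0 = A' := by
          ext a
          simp [hbase, diffuse, hI, Set.mem_image, Sum.inl.injEq]
        rw [hE0, hbase0]
        simpa using G_refl hcl 0 (subset_rfl : A' ⊆ A')
    | succ n ih =>
        set D := base n ∪ ⋃ i ∈ E n, (L.get i).2.2 with hD
        set newE := E (n + 1) \ E n with hnewE
        have hEn_sub : E n ⊆ E (n + 1) := by
          intro i hi
          rcases Finset.mem_filter.1 hi with ⟨hu, hm⟩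
          exact Finset.mem_filter.2 ⟨hu, diffuse_mono_s17 Ns s I (Nat.le_succ n) hm⟩
        have hnew : ∀ i ∈ newE, (L.get i).1 ⊆ D ∧
            Formula.atom (L.get i).1 (L.get i).2.1 (L.get i).2.2 ∈ Γ := by
          intro i hi
          rcases Finset.mem_sdiff.1 hi with ⟨hi1, hi2⟩
          have hm1 : Sum.inr i ∈ diffuse Ns s I (n + 1) := (Finset.mem_filter.1 hi1).2
          have hm2 : Sum.inr i ∉ diffuse Ns s I n := by
            intro hc
            exact hi2 (Finset.mem_filter.2 ⟨Finset.mem_univ _, hc⟩)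
          rcases gadget_step L Γ hs hb' hm1 with h | ⟨hl, hsubA, _⟩
          · exact absurd h hm2
          · exact ⟨hsubA.trans (Set.subset_union_left), hl⟩
        have step := G_chain_finset hcl newE (fun i => (L.get i).1)
          (fun i => (L.get i).2.2) (fun i => (L.get i).2.1) ih
          (fun i hi => (hnew i hi).1) (fun i hi => (hnew i hi).2)
        have hq : (∑ i ∈ E n, (L.get i).2.1) + ∑ i ∈ newE, (L.get i).2.1 =
            ∑ i ∈ E (n + 1), (L.get i).2.1 := by
          rw [hnewE, add_comm]
          exact Finset.sum_sdiff hEn_sub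
        rw [hq] at step
        refine G_proj hcl step ?_
        intro x hx
        rcases hx with hx | hx
        · -- x ∈ base (n+1)
          rcases base_step L Γ hx with h | ⟨i, hl, hm, hB⟩
          · exact Or.inl (Or.inl h)
          · exact Or.inl (Or.inr (Set.mem_biUnion
              (Finset.mem_filter.2 ⟨Finset.mem_univ _, hm⟩) hB))
        · -- x ∈ ⋃ i ∈ E (n+1), B i
          rcases Set.mem_iUnion₂.1 hx with ⟨i, hi, hBx⟩
          by_cases hiE : i ∈ E n
          · exact Or.inl (Or.inr (Set.mem_biUnion hiE hBx))
          · exact Or.inr (Set.mem_biUnion (Finset.mem_sdiff.2 ⟨hi, hiE⟩) hBx)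
  -- find a stage containing all of B'
  have hstage : ∃ n : ℕ, B' ⊆ base n := by
    have hchoice : ∀ b : α, ∃ n : ℕ, b ∈ B' → Sum.inl b ∈ diffuse Ns s I n := by
      intro b
      by_cases hbB : b ∈ B'
      · have := hsub ⟨b, hbB, rfl⟩
        rcases Set.mem_iUnion.1 this with ⟨n, hn⟩
        exact ⟨n, fun _ => hn⟩
      · exact ⟨0, fun hc => absurd hc hbB⟩
    choose f hf using hchoice
    refine ⟨Finset.univ.sup f, fun b hbB => ?_⟩
    exact diffuse_mono_s17 Ns s I (Finset.le_sup (Finset.mem_univ b)) (hf b hbB)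
  obtain ⟨n, hn⟩ := hstage
  have hmem : Formula.atom A' (∑ i ∈ E n, (L.get i).2.1) B' ∈ Γ :=
    G_proj hcl (main n) (fun x hx => Or.inl (hn hx))
  -- the total budget is at most p'
  have hqle : (∑ i ∈ E n, (L.get i).2.1) ≤ p' := by
    have h1 : ((∑ i ∈ E n, (L.get i).2.1 : NNReal) : ℝ) =
        ∑ i ∈ E n, ((L.get i).2.1 : ℝ) := by push_cast; ring
    have h2 : ∑ i ∈ E n, ((L.get i).2.1 : ℝ) ≤ ∑ i ∈ E n, s (Sum.inr i) := by
      apply Finset.sum_le_sum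
      intro i hi
      exact gadget_budget L Γ hs hb' n i (Finset.mem_filter.1 hi).2
    have h3 : ∑ i ∈ E n, s (Sum.inr i) ≤ budget s := by
      rw [budget, Fintype.sum_sum_type]
      have hl : (0:ℝ) ≤ ∑ a : α, s (Sum.inl a) :=
        Finset.sum_nonneg (fun a _ => hs _)
      have hr : ∑ i ∈ E n, s (Sum.inr i) ≤ ∑ i : Fin L.length, s (Sum.inr i) :=
        Finset.sum_le_sum_of_subset_of_nonneg (Finset.subset_univ _)
          (fun i _ _ => hs _)
      linarith
    have : ((∑ i ∈ E n, (L.get i).2.1 : NNReal) : ℝ) ≤ (p' : ℝ) := by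
      rw [h1]; linarith
    exact_mod_cast this
  exact G_mono hcl hmem hqle

end Soundness
/-- Completeness of the logic of promotional marketing: if `⊬ φ` then there is a
(finite) social network whose agent set extends `𝒜₀` that does not satisfy `φ`. -/
theorem promo_completeness {Agent0 : Type} [Fintype Agent0] (φ : Formula Agent0)
    (h : ¬ PromoDeriv φ) :
    ∃ (Extra : Type) (hF : Fintype Extra) (N : SocialNetwork (Agent0 ⊕ Extra)),
      haveI := hF
      ¬ PromoSatisfies N (Formula.map Sum.inl φ) := by
  classical
  obtain ⟨Γ, hmem, hcons, hmax⟩ := lindenbaum h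
  have hcl : ∀ ψ : Formula Agent0, DerivFrom Γ ψ → ψ ∈ Γ :=
    fun ψ d => max_closed hcons hmax d
  set L := atomsOf φ with hLdef
  refine ⟨Fin L.length, inferInstance, canonN L Γ, ?_⟩
  have key : ∀ ψ : Formula Agent0, (∀ t ∈ atomsOf ψ, t ∈ L) →
      (PromoSatisfies (canonN L Γ) (Formula.map Sum.inl ψ) ↔ ψ ∈ Γ) := by
    intro ψ
    induction ψ with
    | atom A p B =>
        intro hsubL
        have htL : (A, p, B) ∈ L := hsubL _ (by simp [atomsOf])
        constructor
        · intro hsat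
          exact canonN_sound L Γ hcl (budget_le_bigK L htL) hsat
        · intro hΓ
          rcases List.mem_iff_get.1 htL with ⟨i, hi⟩
          have hl : live L Γ i := by simp only [live, hi]; exact hΓ
          exact canonN_sat L Γ i hi hl
    | neg ψ ih =>
        intro hsubL
        have ihψ := ih (fun t ht => hsubL t ht)
        have : PromoSatisfies (canonN L Γ) (Formula.map Sum.inl (Formula.neg ψ)) ↔
            ¬ PromoSatisfies (canonN L Γ) (Formula.map Sum.inl ψ) := Iff.rfl
        rw [this, ihψ, ← max_neg_iff hmem hcons hmax]
    | imp ψ χ ih1 ih2 =>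
        intro hsubL
        have ihψ := ih1 (fun t ht => hsubL t (by simp [atomsOf]; exact Or.inl ht))
        have ihχ := ih2 (fun t ht => hsubL t (by simp [atomsOf]; exact Or.inr ht))
        have : PromoSatisfies (canonN L Γ) (Formula.map Sum.inl (Formula.imp ψ χ)) ↔
            (PromoSatisfies (canonN L Γ) (Formula.map Sum.inl ψ) →
              PromoSatisfies (canonN L Γ) (Formula.map Sum.inl χ)) := Iff.rfl
        rw [this, ihψ, ihχ, ← max_imp_iff hmem hcons hmax]
  intro hsat
  exact hcons (.mem ((key φ (fun t ht => ht)).1 hsat))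
end

section
/- (Completeness of the logic of preventive marketing) For any finite set 𝒜₀ and any formula φ ∈ Φ(𝒜₀): if φ is not derivable in the preventive proof system (⊬ φ), then there exists a social network N = (𝒜, w, λ, θ) with 𝒜₀ ⊆ 𝒜 (so that φ ∈ Φ(𝒜)) such that N ⊭ φ under the preventive semantics. -/
open scoped BigOperators Classical

namespace PrevCompletenessProof

variable {α : Type}

/-! ### Propositional machinery -/

def imps (l : List (Formula α)) (ψ : Formula α) : Formula α := l.foldr .imp ψ

lemma evalWith_imps (v : Set α → NNReal → Set α → Prop) (l : List (Formula α)) (ψ : Formula α) :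
    evalWith v (imps l ψ) ↔ ((∀ χ ∈ l, evalWith v χ) → evalWith v ψ) := by
  induction l with
  | nil => simp [imps]
  | cons a l ih =>
    simp only [imps, List.foldr_cons] at ih ⊢
    show (evalWith v a → evalWith v (List.foldr Formula.imp ψ l)) ↔ _
    rw [ih]
    constructor
    · intro h hall
      exact h (hall a (by simp)) (fun χ hχ => hall χ (by simp [hχ]))
    · intro h ha hl
      refine h ?_
      intro χ hχ
      rcases List.mem_cons.1 hχ with rfl | hχ
      · exact ha
      · exact hl χ hχ

def Derives (Γ : Set (Formula α)) (ψ : Formula α) : Prop :=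
  ∃ l : List (Formula α), (∀ χ ∈ l, χ ∈ Γ) ∧ PrevDeriv (imps l ψ)

def fbot : Formula α := .neg (.imp (.atom ∅ 0 ∅) (.atom ∅ 0 ∅))

lemma evalWith_fbot (v : Set α → NNReal → Set α → Prop) : ¬ evalWith v (fbot (α := α)) := by
  simp [fbot, evalWith]

lemma derives_of_mem {Γ : Set (Formula α)} {ψ : Formula α} (h : ψ ∈ Γ) : Derives Γ ψ :=
  ⟨[ψ], by simpa using h, PrevDeriv.taut (by intro v; simp [imps, evalWith])⟩

lemma derives_of_deriv {Γ : Set (Formula α)} {ψ : Formula α} (h : PrevDeriv ψ) : Derives Γ ψ :=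
  ⟨[], by simp, h⟩

lemma derives_mp {Γ : Set (Formula α)} {ψ χ : Formula α}
    (h1 : Derives Γ (.imp ψ χ)) (h2 : Derives Γ ψ) : Derives Γ χ := by
  obtain ⟨l1, hl1, hd1⟩ := h1
  obtain ⟨l2, hl2, hd2⟩ := h2
  refine ⟨l1 ++ l2, ?_, ?_⟩
  · intro x hx; rcases List.mem_append.1 hx with hx | hx
    · exact hl1 x hx
    · exact hl2 x hx
  · have htaut : Tautology (.imp (imps l1 (.imp ψ χ)) (.imp (imps l2 ψ) (imps (l1 ++ l2) χ))) := by
      intro v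
      show evalWith v _ → evalWith v _
      rw [evalWith_imps]
      intro h1'
      show evalWith v _ → evalWith v _
      rw [evalWith_imps, evalWith_imps]
      intro h2' hall
      have ha1 : ∀ χ' ∈ l1, evalWith v χ' := fun χ' hχ' => hall χ' (List.mem_append_left _ hχ')
      have ha2 : ∀ χ' ∈ l2, evalWith v χ' := fun χ' hχ' => hall χ' (List.mem_append_right _ hχ')
      exact (h1' ha1) (h2' ha2)
    exact PrevDeriv.mp (PrevDeriv.mp (PrevDeriv.taut htaut) hd1) hd2

lemma derives_mono {Γ Γ' : Set (Formula α)} (h : Γ ⊆ Γ') {ψ : Formula α}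
    (hd : Derives Γ ψ) : Derives Γ' ψ := by
  obtain ⟨l, hl, hd⟩ := hd
  exact ⟨l, fun χ hχ => h (hl χ hχ), hd⟩

/-- Deduction theorem. -/
lemma derives_deduction {Γ : Set (Formula α)} {ψ χ : Formula α}
    (h : Derives (Γ ∪ {ψ}) χ) : Derives Γ (.imp ψ χ) := by
  classical
  obtain ⟨l, hl, hd⟩ := h
  refine ⟨l.filter (fun x => decide (x ∈ Γ)), ?_, ?_⟩
  · intro x hx
    have := List.mem_filter.1 hx
    simpa using this.2
  · have htaut : Tautology (.imp (imps l χ)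
        (imps (l.filter (fun x => decide (x ∈ Γ))) (.imp ψ χ))) := by
      intro v
      show evalWith v _ → evalWith v _
      rw [evalWith_imps, evalWith_imps]
      intro H H' 
      show evalWith v ψ → evalWith v χ
      intro hψ
      apply H
      intro x hx
      by_cases hxΓ : x ∈ Γ
      · exact H' x (List.mem_filter.2 ⟨hx, by simpa using hxΓ⟩)
      · have : x = ψ := by
          rcases hl x hx with h' | h'
          · exact absurd h' hxΓ
          · simpa using h'
        subst this; exact hψ
    exact PrevDeriv.mp (PrevDeriv.taut htaut) hd

/-- consistency-style facts -/
lemma derives_bot_of_both {Γ : Set (Formula α)} {ψ : Formula α}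
    (h1 : Derives Γ ψ) (h2 : Derives Γ ψ.neg) : Derives Γ (fbot (α := α)) := by
  have ht : Tautology (Formula.imp ψ (.imp ψ.neg (fbot (α := α)))) := by
    intro v
    show evalWith v ψ → (¬ evalWith v ψ) → evalWith v _
    intro h h'; exact absurd h h'
  exact derives_mp (derives_mp (derives_of_deriv (PrevDeriv.taut ht)) h1) h2

section Lindenbaum

variable {φ0 : Formula α}

/-- Lindenbaum: a maximal consistent set containing `¬φ0`, when `φ0` is not derivable. -/
lemma lindenbaum (h : ¬ PrevDeriv φ0) :
    ∃ Γ : Set (Formula α), (Formula.neg φ0 ∈ Γ) ∧ ¬ Derives Γ (fbot (α := α)) ∧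
      (∀ ψ : Formula α, ¬ Derives Γ ψ → Derives Γ ψ.neg) := by
  classical
  set S : Set (Set (Formula α)) := {Γ | Formula.neg φ0 ∈ Γ ∧ ¬ Derives Γ (fbot (α := α))} with hS
  have hbase : ({Formula.neg φ0} : Set (Formula α)) ∈ S := by
    constructor
    · exact rfl
    · rintro ⟨l, hl, hd⟩
      apply h
      have ht : Tautology (.imp (imps l (fbot (α := α))) φ0) := by
        intro v
        show evalWith v _ → evalWith v φ0
        rw [evalWith_imps]
        intro H
        by_contra hφ
        have : ∀ χ ∈ l, evalWith v χ := by
          intro χ hχ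
          have : χ = Formula.neg φ0 := by simpa using hl χ hχ
          subst this
          exact hφ
        exact evalWith_fbot v (H this)
      exact PrevDeriv.mp (PrevDeriv.taut ht) hd
  have hchain : ∀ c ⊆ S, IsChain (fun x1 x2 => x1 ⊆ x2) c → c.Nonempty →
      ∃ ub ∈ S, ∀ s ∈ c, s ⊆ ub := by
    intro c hcS hchain ⟨t0, ht0⟩
    refine ⟨⋃₀ c, ⟨?_, ?_⟩, fun t ht => Set.subset_sUnion_of_mem ht⟩
    · exact Set.mem_sUnion.2 ⟨t0, ht0, (hcS ht0).1⟩
    · rintro ⟨l, hl, hd⟩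
      -- find a single chain member containing all of l
      have : ∃ t ∈ c, ∀ χ ∈ l, χ ∈ t := by
        clear hd
        induction l with
        | nil => exact ⟨t0, ht0, by simp⟩
        | cons a l ih =>
          obtain ⟨t, htc, htl⟩ := ih (fun χ hχ => hl χ (by simp [hχ]))
          obtain ⟨ta, htac, hta⟩ := Set.mem_sUnion.1 (hl a (by simp))
          rcases hchain.total htc htac with hsub | hsub
          · refine ⟨ta, htac, ?_⟩
            intro χ hχ
            rcases List.mem_cons.1 hχ with rfl | hχ
            · exact hta
            · exact hsub (htl χ hχ)
          · refine ⟨t, htc, ?_⟩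
            intro χ hχ
            rcases List.mem_cons.1 hχ with rfl | hχ
            · exact hsub hta
            · exact htl χ hχ
      obtain ⟨t, htc, htl⟩ := this
      exact (hcS htc).2 ⟨l, htl, hd⟩
  obtain ⟨Γ, hsub, hmax⟩ := zorn_subset_nonempty S hchain _ hbase
  have hΓS : Γ ∈ S := hmax.1
  refine ⟨Γ, hΓS.1, hΓS.2, ?_⟩
  intro ψ hψ
  have hcon : (Γ ∪ {ψ.neg}) ∈ S := by
    constructor
    · exact Set.mem_union_left _ hΓS.1
    · intro hder
      have h2 : Derives Γ (.imp ψ.neg (fbot (α := α))) := derives_deduction hder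
      have ht : Tautology (.imp (.imp ψ.neg (fbot (α := α))) ψ) := by
        intro v
        show (((¬ evalWith v ψ) → evalWith v (fbot (α := α)))) → evalWith v ψ
        intro H
        by_contra h'
        exact evalWith_fbot v (H h')
      exact hψ (derives_mp (derives_of_deriv (PrevDeriv.taut ht)) h2)
  have : Γ ∪ {ψ.neg} ⊆ Γ := hmax.2 hcon Set.subset_union_left
  exact derives_of_mem (this (Set.mem_union_right _ rfl))

/-- Truth lemma for the canonical valuation. -/
lemma truth_lemma {Γ : Set (Formula α)} (hc : ¬ Derives Γ (fbot (α := α)))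
    (hm : ∀ ψ : Formula α, ¬ Derives Γ ψ → Derives Γ ψ.neg) :
    ∀ ψ : Formula α, evalWith (fun A p B => Derives Γ (.atom A p B)) ψ ↔ Derives Γ ψ := by
  intro ψ
  induction ψ with
  | atom A p B => exact Iff.rfl
  | neg ψ ih =>
    show (¬ evalWith _ ψ) ↔ _
    rw [ih]
    constructor
    · exact hm ψ
    · intro h1 h2
      exact hc (derives_bot_of_both h2 h1)
  | imp ψ χ ihψ ihχ =>
    show (evalWith _ ψ → evalWith _ χ) ↔ _
    rw [ihψ, ihχ]
    constructor
    · intro H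
      by_cases hψ : Derives Γ ψ
      · have hχ := H hψ
        have ht : Tautology (.imp χ (.imp ψ χ)) := by
          intro v
          exact fun h _ => h
        exact derives_mp (derives_of_deriv (PrevDeriv.taut ht)) hχ
      · have hnψ := hm ψ hψ
        have ht : Tautology (.imp ψ.neg (.imp ψ χ)) := by
          intro v
          show (¬ evalWith v ψ) → (evalWith v ψ → evalWith v χ)
          intro h h'; exact absurd h' h
        exact derives_mp (derives_of_deriv (PrevDeriv.taut ht)) hnψ
    · intro H hψ
      exact derives_mp H hψ

end Lindenbaum

end PrevCompletenessProof
namespace PrevCompletenessProof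

variable {α : Type}

/-! ### Closure properties of the canonical valuation -/

section VLemmas

variable {Γ : Set (Formula α)}

/-- canonical valuation on atoms -/
def Vd (Γ : Set (Formula α)) (A : Set α) (p : NNReal) (B : Set α) : Prop :=
  Derives Γ (.atom A p B)

lemma vRefl {A B : Set α} (p : NNReal) (h : B ⊆ A) : Vd Γ A p B :=
  derives_of_deriv (PrevDeriv.refl p h)

lemma vMono {A B : Set α} {p q : NNReal} (h : q ≤ p) (hd : Vd Γ A p B) : Vd Γ A q B :=
  derives_mp (derives_of_deriv (PrevDeriv.mono A B h)) hd

lemma vTrans {A B C : Set α} {p : NNReal} (h1 : Vd Γ A p B) (h2 : Vd Γ B p C) : Vd Γ A p C :=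
  derives_mp (derives_mp (derives_of_deriv (PrevDeriv.trans A B C p)) h1) h2

lemma vAug (C : Set α) {A B : Set α} {p : NNReal} (h : Vd Γ A p B) : Vd Γ (A ∪ C) p (B ∪ C) :=
  derives_mp (derives_of_deriv (PrevDeriv.aug A B C p)) h

lemma vSingleton {A B : Set α} {p : NNReal} {b : α} (h : Vd Γ A p B) (hb : b ∈ B) :
    Vd Γ A p {b} :=
  vTrans h (vRefl p (by simpa using hb))

lemma vUnionFinset {A : Set α} {p : NNReal} (F : Finset α)
    (h : ∀ b ∈ F, Vd Γ A p {b}) : Vd Γ A p (↑F : Set α) := by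
  classical
  induction F using Finset.induction_on with
  | empty => exact vRefl p (by simp)
  | @insert b F hbF ih =>
    have hF : Vd Γ A p (↑F : Set α) := ih (fun c hc => h c (Finset.mem_insert_of_mem hc))
    have hb : Vd Γ A p {b} := h b (Finset.mem_insert_self _ _)
    have h1 : Vd Γ A p ((↑F : Set α) ∪ A) := by
      have := vAug A hF
      rwa [Set.union_self] at this
    have h2 : Vd Γ ((↑F : Set α) ∪ A) p ({b} ∪ ((↑F : Set α) ∪ A)) := by
      have := vAug ((↑F : Set α) ∪ A) hb
      have he : A ∪ ((↑F : Set α) ∪ A) = (↑F : Set α) ∪ A := by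
        ext x; simp [Set.mem_union]; tauto
      rwa [he] at this
    have h3 : Vd Γ A p ({b} ∪ ((↑F : Set α) ∪ A)) := vTrans h1 h2
    refine vTrans h3 (vRefl p ?_)
    intro x hx
    simp only [Finset.coe_insert, Set.mem_insert_iff, Finset.mem_coe] at hx
    rcases hx with rfl | hx
    · exact Or.inl rfl
    · exact Or.inr (Or.inl hx)

lemma vUnionSet [Fintype α] {A : Set α} {p : NNReal} (B : Set α)
    (h : ∀ b ∈ B, Vd Γ A p {b}) : Vd Γ A p B := by
  classical
  have := vUnionFinset (Γ := Γ) (A := A) (p := p) B.toFinset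
    (fun b hb => h b (Set.mem_toFinset.1 hb))
  rwa [Set.coe_toFinset] at this

/-- The key derivation: if `U` sits inside the `q`-robust set of `A` and `U ▷_pj {y}`
with `q ≤ pj`, then `y` is `q`-robust from `A`. -/
lemma vD3 [Fintype α] {A U : Set α} {q pj : NNReal} {y : α}
    (hUR : ∀ u ∈ U, Vd Γ A q {u}) (hU : Vd Γ U pj {y}) (hq : q ≤ pj) :
    Vd Γ A q {y} := by
  have h1 : Vd Γ U q {y} := vMono hq hU
  have h2 : Vd Γ A q U := vUnionSet U hUR
  have h3 : Vd Γ A q (U ∪ A) := by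
    have := vAug A h2; rwa [Set.union_self] at this
  have h4 : Vd Γ (U ∪ A) q ({y} ∪ (U ∪ A)) := by
    have := vAug (U ∪ A) h1
    have he : U ∪ (U ∪ A) = U ∪ A := by rw [← Set.union_assoc, Set.union_self]
    rwa [he] at this
  exact vTrans (vTrans h3 h4) (vRefl q (by intro x hx; exact Or.inl hx))

end VLemmas

end PrevCompletenessProof
namespace PrevCompletenessProof

/-! ### Generic diffusion lemmas -/

section Diffusion

variable {X : Type} [Fintype X] {N : SocialNetwork X} {s : X → ℝ} {A : Set X}

lemma diffuse_succ_def (n : ℕ) :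
    diffuse N s A (n + 1) = diffuse N s A n ∪
      {b : X | N.lam b * s b +
          ∑ a ∈ Finset.univ.filter (fun a => a ∈ diffuse N s A n), N.w a b ≥ N.thr b} := rfl

lemma diffuse_zero_def : diffuse N s A 0 = A := rfl

lemma mem_diffuse_succ_of {n : ℕ} {b : X}
    (h : N.thr b ≤ N.lam b * s b +
        ∑ a ∈ Finset.univ.filter (fun a => a ∈ diffuse N s A n), N.w a b) :
    b ∈ diffuse N s A (n + 1) := by
  rw [diffuse_succ_def]
  exact Or.inr h

lemma diffuse_mono {n m : ℕ} (h : n ≤ m) : diffuse N s A n ⊆ diffuse N s A m := by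
  induction m with
  | zero => simpa [Nat.le_zero.1 h]
  | succ m ih =>
    rcases Nat.lt_or_ge n (m+1) with h' | h'
    · refine subset_trans (ih (Nat.lt_succ_iff.1 h')) ?_
      rw [diffuse_succ_def]; exact Set.subset_union_left
    · have : n = m + 1 := le_antisymm h h'
      subst this; exact subset_rfl

lemma diffuse_subset_star (n : ℕ) : diffuse N s A n ⊆ diffuseStar N s A :=
  fun x hx => Set.mem_iUnion.2 ⟨n, hx⟩

/-- invariant principle: if nothing outside `G` can ever fire, diffusion stays in `G`. -/
lemma diffuse_subset_invariant {G : Set X} (hA : A ⊆ G)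
    (hG : ∀ b ∉ G, N.lam b * s b +
        ∑ a ∈ Finset.univ.filter (fun a => a ∈ G), N.w a b < N.thr b) :
    ∀ m, diffuse N s A m ⊆ G := by
  intro m
  induction m with
  | zero => exact hA
  | succ m ih =>
    rw [diffuse_succ_def]
    rintro b (hb | hb)
    · exact ih hb
    · by_contra hbG
      have hsum : ∑ a ∈ Finset.univ.filter (fun a => a ∈ diffuse N s A m), N.w a b ≤
          ∑ a ∈ Finset.univ.filter (fun a => a ∈ G), N.w a b := by
        apply Finset.sum_le_sum_of_subset_of_nonneg
        · intro a ha
          rw [Finset.mem_filter] at ha ⊢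
          exact ⟨ha.1, ih ha.2⟩
        · intro a _ _; exact N.w_nonneg a b
      have := hG b hbG
      have hb' : N.thr b ≤ N.lam b * s b +
          ∑ a ∈ Finset.univ.filter (fun a => a ∈ diffuse N s A m), N.w a b := hb
      linarith

end Diffusion

/-! ### The canonical network -/

section Network

variable {β : Type} [Fintype β]

abbrev XA (β : Type) (n : ℕ) : Type := β ⊕ ((Set β × Fin n) ⊕ (Set β × Fin n))

def vnd {β : Type} {n : ℕ} (R : Set β) (j : Fin n) : XA β n := Sum.inr (Sum.inl (R, j))
def nnd {β : Type} {n : ℕ} (U : Set β) (j : Fin n) : XA β n := Sum.inr (Sum.inr (U, j))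

lemma vnd_inj {β : Type} {n : ℕ} (j : Fin n) :
    Function.Injective (fun R : Set β => vnd R j) := by
  intro a b h
  simpa [vnd, Prod.ext_iff] using h

noncomputable def cNet (V : Set β → NNReal → Set β → Prop) (L : List NNReal) :
    SocialNetwork (XA β L.length) where
  w x y :=
    match y with
    | Sum.inl b => if ∃ U j, x = nnd U j ∧ V U (L.get j) {b} then 1 else 0
    | Sum.inr (Sum.inl (R, j)) =>
        if h : (j : ℕ) + 1 < L.length then
          (if x = vnd R ⟨(j : ℕ) + 1, h⟩ then 1 + (L.get j : ℝ) else 0)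
        else 0
    | Sum.inr (Sum.inr (U, j)) =>
        if (∃ u ∈ U, x = Sum.inl u) ∨ (∃ R : Set β, U ⊆ R ∧ x = vnd R j) then 1 else 0
  w_nonneg := by
    intro a b
    rcases b with b | ⟨⟨R, j⟩ | ⟨U, j⟩⟩ <;> dsimp only
    · split <;> norm_num
    · have h0 : (0:ℝ) ≤ (L.get j : ℝ) := (L.get j).coe_nonneg
      split
      · split <;> linarith
      · exact le_refl 0
    · split <;> norm_num
  lam x :=
    match x with
    | Sum.inl _ => 0
    | Sum.inr (Sum.inl _) => -1
    | Sum.inr (Sum.inr _) => 0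
  thr x :=
    match x with
    | Sum.inl _ => 1
    | Sum.inr (Sum.inl (_, j)) => if (j : ℕ) + 1 < L.length then 1 else -(L.get j : ℝ)
    | Sum.inr (Sum.inr (U, _)) =>
        (U.toFinset.card : ℝ) +
          (((Finset.univ : Finset (Set β)).filter (fun R => U ⊆ R)).card : ℝ)

variable (V : Set β → NNReal → Set β → Prop) (L : List NNReal)

lemma cNet_lam_inl (b : β) : (cNet V L).lam (Sum.inl b) = 0 := rfl
lemma cNet_lam_vnd (R : Set β) (j : Fin L.length) : (cNet V L).lam (vnd R j) = -1 := rfl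
lemma cNet_lam_nnd (U : Set β) (j : Fin L.length) : (cNet V L).lam (nnd U j) = 0 := rfl
lemma cNet_thr_inl (b : β) : (cNet V L).thr (Sum.inl b) = 1 := rfl
lemma cNet_thr_vnd (R : Set β) (j : Fin L.length) :
    (cNet V L).thr (vnd R j) = if (j : ℕ) + 1 < L.length then 1 else -(L.get j : ℝ) := rfl
lemma cNet_thr_nnd (U : Set β) (j : Fin L.length) :
    (cNet V L).thr (nnd U j) = (U.toFinset.card : ℝ) +
      (((Finset.univ : Finset (Set β)).filter (fun R => U ⊆ R)).card : ℝ) := rfl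
lemma cNet_w_inl (x : XA β L.length) (b : β) :
    (cNet V L).w x (Sum.inl b) = if ∃ U j, x = nnd U j ∧ V U (L.get j) {b} then 1 else 0 := rfl
lemma cNet_w_vnd (x : XA β L.length) (R : Set β) (j : Fin L.length) :
    (cNet V L).w x (vnd R j) = if h : (j : ℕ) + 1 < L.length then
        (if x = vnd R ⟨(j : ℕ) + 1, h⟩ then 1 + (L.get j : ℝ) else 0)
      else 0 := rfl
lemma cNet_w_nnd (x : XA β L.length) (U : Set β) (j : Fin L.length) :
    (cNet V L).w x (nnd U j) =
      if (∃ u ∈ U, x = Sum.inl u) ∨ (∃ R : Set β, U ⊆ R ∧ x = vnd R j) then 1 else 0 := rfl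

/-- the finset of all "inputs" of an n-node -/
noncomputable def nInputs (U : Set β) (j : Fin L.length) : Finset (XA β L.length) :=
  (U.toFinset.image Sum.inl) ∪
    (((Finset.univ : Finset (Set β)).filter (fun R => U ⊆ R)).image (fun R => vnd R j))

lemma mem_nInputs_iff {U : Set β} {j : Fin L.length} {x : XA β L.length} :
    x ∈ nInputs (β := β) L U j ↔
      ((∃ u ∈ U, x = Sum.inl u) ∨ (∃ R : Set β, U ⊆ R ∧ x = vnd R j)) := by
  classical
  simp only [nInputs, Finset.mem_union, Finset.mem_image, Finset.mem_filter,
    Finset.mem_univ, true_and, Set.mem_toFinset]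
  constructor
  · rintro (⟨u, hu, rfl⟩ | ⟨R, hR, rfl⟩)
    · exact Or.inl ⟨u, hu, rfl⟩
    · exact Or.inr ⟨R, hR, rfl⟩
  · rintro (⟨u, hu, rfl⟩ | ⟨R, hR, rfl⟩)
    · exact Or.inl ⟨u, hu, rfl⟩
    · exact Or.inr ⟨R, hR, rfl⟩

lemma card_nInputs (U : Set β) (j : Fin L.length) :
    (nInputs (β := β) L U j).card = U.toFinset.card +
      (((Finset.univ : Finset (Set β)).filter (fun R => U ⊆ R)).card) := by
  classical
  rw [nInputs, Finset.card_union_of_disjoint, Finset.card_image_of_injective _ Sum.inl_injective,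
    Finset.card_image_of_injective _ (vnd_inj j)]
  rw [Finset.disjoint_left]
  rintro a ha hb
  obtain ⟨u, _, rfl⟩ := Finset.mem_image.1 ha
  obtain ⟨R, _, h⟩ := Finset.mem_image.1 hb
  exact absurd h.symm (by simp [vnd])

end Network

/-! ### Claim 1: true atoms cannot be prevented within their budget -/

section Claim1

variable {β : Type} [Fintype β]
variable {V : Set β → NNReal → Set β → Prop} {L : List NNReal}

lemma spend_le {s : XA β L.length → ℝ} (hs : IsSpending s) {p : ℝ} (hb : budget s ≤ p)
    (x : XA β L.length) : s x ≤ p := by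
  refine le_trans ?_ hb
  exact Finset.single_le_sum (fun a _ => hs a) (Finset.mem_univ x)

lemma vnd_active (hL : L.Pairwise (· ≤ ·)) {s : XA β L.length → ℝ} (hs : IsSpending s)
    {p : NNReal} (hb : budget s ≤ (p : ℝ)) {A : Set β} :
    ∀ (d : ℕ) (j : Fin L.length), L.length = (j : ℕ) + 1 + d → p ≤ L.get j →
      ∀ R : Set β, vnd R j ∈ diffuse (cNet V L) s (Sum.inl '' A) (d + 1) := by
  intro d
  induction d with
  | zero =>
    intro j hj hpj R
    apply mem_diffuse_succ_of
    have hnottop : ¬ ((j : ℕ) + 1 < L.length) := by omega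
    rw [cNet_thr_vnd, if_neg hnottop, cNet_lam_vnd]
    have h1 : s (vnd R j) ≤ (L.get j : ℝ) :=
      le_trans (spend_le hs hb _) (by exact_mod_cast hpj)
    have h2 : (0:ℝ) ≤ ∑ a ∈ Finset.univ.filter
        (fun a => a ∈ diffuse (cNet V L) s (Sum.inl '' A) 0), (cNet V L).w a (vnd R j) :=
      Finset.sum_nonneg (fun a _ => (cNet V L).w_nonneg a _)
    linarith
  | succ d ih =>
    intro j hj hpj R
    have htop : (j : ℕ) + 1 < L.length := by omega
    set j' : Fin L.length := ⟨(j : ℕ) + 1, htop⟩ with hj'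
    have hj'le : p ≤ L.get j' := by
      refine le_trans hpj ?_
      exact List.Pairwise.rel_get_of_le hL (by simp [hj', Fin.le_def])
    have hparent : vnd R j' ∈ diffuse (cNet V L) s (Sum.inl '' A) (d + 1) :=
      ih j' (by simp [hj']; omega) hj'le R
    apply mem_diffuse_succ_of
    rw [cNet_thr_vnd, if_pos htop, cNet_lam_vnd]
    have hsum : (1 + (L.get j : ℝ)) ≤ ∑ a ∈ Finset.univ.filter
        (fun a => a ∈ diffuse (cNet V L) s (Sum.inl '' A) (d+1)), (cNet V L).w a (vnd R j) := by
      have hmem : vnd R j' ∈ Finset.univ.filter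
          (fun a => a ∈ diffuse (cNet V L) s (Sum.inl '' A) (d+1)) :=
        Finset.mem_filter.2 ⟨Finset.mem_univ _, hparent⟩
      have hw : (cNet V L).w (vnd R j') (vnd R j) = 1 + (L.get j : ℝ) := by
        rw [cNet_w_vnd, dif_pos htop, if_pos rfl]
      calc (1 + (L.get j : ℝ)) = (cNet V L).w (vnd R j') (vnd R j) := hw.symm
        _ ≤ _ := Finset.single_le_sum (fun a _ => (cNet V L).w_nonneg a _) hmem
    have h1 : s (vnd R j) ≤ (L.get j : ℝ) :=
      le_trans (spend_le hs hb _) (by exact_mod_cast hpj)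
    linarith

lemma claim1 (hL : L.Pairwise (· ≤ ·)) {A : Set β} {p : NNReal} {b : β}
    (hV : V A p {b}) (hp : p ∈ L) (s : XA β L.length → ℝ) (hs : IsSpending s)
    (hb : budget s ≤ (p : ℝ)) :
    Sum.inl b ∈ diffuseStar (cNet V L) s (Sum.inl '' A) := by
  classical
  obtain ⟨j₀, hj₀⟩ := List.mem_iff_get.1 hp
  have hj₀p : p ≤ L.get j₀ := le_of_eq hj₀.symm
  have hd : L.length = (j₀ : ℕ) + 1 + (L.length - 1 - (j₀ : ℕ)) := by
    have := j₀.isLt; omega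
  set m₀ : ℕ := (L.length - 1 - (j₀ : ℕ)) + 1 with hm₀
  have hvnd : ∀ R : Set β, vnd R j₀ ∈ diffuse (cNet V L) s (Sum.inl '' A) m₀ :=
    fun R => vnd_active hL hs hb _ j₀ hd hj₀p R
  -- the n-node for (A, j₀) fires at stage m₀ + 1
  have hnnd : nnd A j₀ ∈ diffuse (cNet V L) s (Sum.inl '' A) (m₀ + 1) := by
    apply mem_diffuse_succ_of
    rw [cNet_thr_nnd, cNet_lam_nnd, zero_mul, zero_add]
    have hsub : nInputs (β := β) L A j₀ ⊆ Finset.univ.filter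
        (fun a => a ∈ diffuse (cNet V L) s (Sum.inl '' A) m₀) := by
      intro x hx
      rcases (mem_nInputs_iff L).1 hx with ⟨u, hu, rfl⟩ | ⟨R, _, rfl⟩
      · refine Finset.mem_filter.2 ⟨Finset.mem_univ _, ?_⟩
        have : Sum.inl u ∈ diffuse (cNet V L) s (Sum.inl '' A) 0 := ⟨u, hu, rfl⟩
        exact diffuse_mono (Nat.zero_le _) this
      · exact Finset.mem_filter.2 ⟨Finset.mem_univ _, hvnd R⟩
    have hone : ∀ x ∈ nInputs (β := β) L A j₀, (cNet V L).w x (nnd A j₀) = 1 := by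
      intro x hx
      rw [cNet_w_nnd, if_pos ((mem_nInputs_iff L).1 hx)]
    calc (A.toFinset.card : ℝ) +
          (((Finset.univ : Finset (Set β)).filter (fun R => A ⊆ R)).card : ℝ)
        = ((nInputs (β := β) L A j₀).card : ℝ) := by
          rw [card_nInputs]; push_cast; ring
      _ = ∑ x ∈ nInputs (β := β) L A j₀, (cNet V L).w x (nnd A j₀) := by
          rw [Finset.sum_congr rfl hone]; simp
      _ ≤ _ := Finset.sum_le_sum_of_subset_of_nonneg hsub
          (fun a _ _ => (cNet V L).w_nonneg a _)
  -- finally b fires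
  have hbmem : Sum.inl b ∈ diffuse (cNet V L) s (Sum.inl '' A) (m₀ + 2) := by
    apply mem_diffuse_succ_of
    rw [cNet_thr_inl, cNet_lam_inl, zero_mul, zero_add]
    have hmem : nnd A j₀ ∈ Finset.univ.filter
        (fun a => a ∈ diffuse (cNet V L) s (Sum.inl '' A) (m₀+1)) :=
      Finset.mem_filter.2 ⟨Finset.mem_univ _, hnnd⟩
    have hw : (cNet V L).w (nnd A j₀) (Sum.inl b) = 1 := by
      rw [cNet_w_inl, if_pos ⟨A, j₀, rfl, by rw [hj₀]; exact hV⟩]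
    calc (1:ℝ) = (cNet V L).w (nnd A j₀) (Sum.inl b) := hw.symm
      _ ≤ _ := Finset.single_le_sum (fun a _ => (cNet V L).w_nonneg a _) hmem
  exact diffuse_subset_star _ hbmem

end Claim1

end PrevCompletenessProof
namespace PrevCompletenessProof

section Claim2

variable {β : Type} [Fintype β]
variable {Γ : Set (Formula β)} {L : List NNReal}

/-- the invariant region used to show prevention succeeds -/
def GSet (R : Set β) (q : NNReal) (L : List NNReal) : Set (XA β L.length) :=
  fun x =>
    match x with
    | Sum.inl y => y ∈ R
    | Sum.inr (Sum.inl (R', j)) => ¬ (R' = R ∧ L.get j < q)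
    | Sum.inr (Sum.inr (U, j)) => (∀ u ∈ U, u ∈ R) ∧ q ≤ L.get j

lemma GSet_inl {R : Set β} {q : NNReal} {L : List NNReal} {y : β} :
    (Sum.inl y ∈ GSet R q L) ↔ y ∈ R := Iff.rfl
lemma GSet_vnd {R R' : Set β} {q : NNReal} {L : List NNReal} {j : Fin L.length} :
    (vnd R' j ∈ GSet R q L) ↔ ¬ (R' = R ∧ L.get j < q) := Iff.rfl
lemma GSet_nnd {R U : Set β} {q : NNReal} {L : List NNReal} {j : Fin L.length} :
    (nnd U j ∈ GSet R q L) ↔ ((∀ u ∈ U, u ∈ R) ∧ q ≤ L.get j) := Iff.rfl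

lemma claim2 (hL : L.Pairwise (· ≤ ·)) {A B : Set β} {q : NNReal}
    (hn : ¬ Vd Γ A q B) :
    ∃ s : XA β L.length → ℝ, IsSpending s ∧ budget s ≤ (q : ℝ) ∧
      ¬ (Sum.inl '' B ⊆ diffuseStar (cNet (Vd Γ) L) s (Sum.inl '' A)) := by
  classical
  have hw : ∃ c ∈ B, ¬ Vd Γ A q {c} := by
    by_contra h
    push_neg at h
    exact hn (vUnionSet B h)
  obtain ⟨c, hcB, hc⟩ := hw
  set R : Set β := {x | Vd Γ A q {x}} with hR
  have hAR : ∀ x ∈ A, x ∈ R := fun x hx => vRefl q (by simpa using hx)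
  have hcR : c ∉ R := hc
  set Jlt : Finset (Fin L.length) := Finset.univ.filter (fun j => L.get j < q) with hJlt
  set s : XA β L.length → ℝ :=
    (fun x => if h : Jlt.Nonempty then
        (if x = vnd R (Jlt.max' h) then ((L.get (Jlt.max' h) : ℝ) + (q : ℝ)) / 2 else 0)
      else 0) with hsdef
  have hs0 : IsSpending s := by
    intro x
    rw [hsdef]
    dsimp only
    split_ifs with h1 h2
    · have h3 : (0:ℝ) ≤ (L.get (Jlt.max' h1) : ℝ) := (L.get _).coe_nonneg
      have h4 : (0:ℝ) ≤ (q : ℝ) := q.coe_nonneg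
      linarith
    · exact le_refl 0
    · exact le_refl 0
  have hsb : budget s ≤ (q : ℝ) := by
    rw [budget, hsdef]
    by_cases h1 : Jlt.Nonempty
    · simp only [dif_pos h1]
      rw [Finset.sum_ite_eq' Finset.univ (vnd R (Jlt.max' h1))
        (fun _ => ((L.get (Jlt.max' h1) : ℝ) + (q : ℝ)) / 2), if_pos (Finset.mem_univ _)]
      have hlt : (L.get (Jlt.max' h1) : ℝ) < (q : ℝ) := by
        have := (Finset.mem_filter.1 (Jlt.max'_mem h1)).2
        exact_mod_cast this
      linarith
    · simp only [dif_neg h1]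
      simp [q.coe_nonneg]
  -- the invariant
  have hinv : ∀ b ∉ GSet R q L, (cNet (Vd Γ) L).lam b * s b +
      ∑ a ∈ Finset.univ.filter (fun a => a ∈ GSet R q L), (cNet (Vd Γ) L).w a b <
      (cNet (Vd Γ) L).thr b := by
    rintro b hbG
    rcases b with y | ⟨⟨R', j⟩ | ⟨U, j⟩⟩
    · -- real agent y ∉ R
      rw [GSet_inl] at hbG
      rw [cNet_lam_inl, cNet_thr_inl, zero_mul, zero_add]
      have hzero : ∑ a ∈ Finset.univ.filter (fun a => a ∈ GSet R q L),
          (cNet (Vd Γ) L).w a (Sum.inl y) = 0 := by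
        apply Finset.sum_eq_zero
        intro a ha
        have haG : a ∈ GSet R q L := (Finset.mem_filter.1 ha).2
        rw [cNet_w_inl, if_neg]
        rintro ⟨U, j, rfl, hVU⟩
        rw [GSet_nnd] at haG
        exact hbG (vD3 haG.1 hVU haG.2)
      rw [hzero]
      norm_num
    · -- vnode
      have hbG' : R' = R ∧ L.get j < q := not_not.1 hbG
      obtain ⟨rfl, hjq⟩ := hbG'
      show (cNet (Vd Γ) L).lam (vnd R j) * s (vnd R j) +
          ∑ a ∈ Finset.univ.filter (fun a => a ∈ GSet R q L), (cNet (Vd Γ) L).w a (vnd R j) <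
          (cNet (Vd Γ) L).thr (vnd R j)
      have hne : Jlt.Nonempty :=
        ⟨j, Finset.mem_filter.2 ⟨Finset.mem_univ _, hjq⟩⟩
      set jstar := Jlt.max' hne with hjstar
      have hjstarq : L.get jstar < q :=
        (Finset.mem_filter.1 (Jlt.max'_mem hne)).2
      have hsval : s (vnd R jstar) = ((L.get jstar : ℝ) + (q : ℝ)) / 2 := by
        rw [hsdef]
        dsimp only
        rw [dif_pos hne, if_pos rfl]
      rw [cNet_lam_vnd, cNet_thr_vnd]
      by_cases hjj : j = jstar
      · by_cases htop : (j : ℕ) + 1 < L.length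
        · rw [if_pos htop]
          have hsum : ∑ a ∈ Finset.univ.filter (fun a => a ∈ GSet R q L),
              (cNet (Vd Γ) L).w a (vnd R j) ≤ 1 + (L.get j : ℝ) := by
            have huniv : ∑ a ∈ (Finset.univ : Finset (XA β L.length)),
                (cNet (Vd Γ) L).w a (vnd R j) = 1 + (L.get j : ℝ) := by
              have hterm : ∀ a : XA β L.length, (cNet (Vd Γ) L).w a (vnd R j) =
                  if a = vnd R ⟨(j:ℕ)+1, htop⟩ then 1 + (L.get j : ℝ) else 0 := by
                intro a; rw [cNet_w_vnd, dif_pos htop]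
              rw [Finset.sum_congr rfl (fun a _ => hterm a),
                Finset.sum_ite_eq' Finset.univ (vnd R ⟨(j:ℕ)+1, htop⟩)
                  (fun _ => 1 + (L.get j : ℝ)), if_pos (Finset.mem_univ _)]
            rw [← huniv]
            exact Finset.sum_le_sum_of_subset_of_nonneg (Finset.subset_univ _)
              (fun a _ _ => (cNet (Vd Γ) L).w_nonneg a _)
          have hgt : (L.get j : ℝ) < s (vnd R j) := by
            rw [hjj, hsval]
            have : (L.get jstar : ℝ) < (q : ℝ) := by exact_mod_cast hjstarq
            linarith
          nlinarith [hsum, hgt]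
        · rw [if_neg htop]
          have hzero : ∑ a ∈ Finset.univ.filter (fun a => a ∈ GSet R q L),
              (cNet (Vd Γ) L).w a (vnd R j) = 0 := by
            apply Finset.sum_eq_zero
            intro a _
            rw [cNet_w_vnd, dif_neg htop]
          rw [hzero]
          have hgt : (L.get j : ℝ) < s (vnd R j) := by
            rw [hjj, hsval]
            have : (L.get jstar : ℝ) < (q : ℝ) := by exact_mod_cast hjstarq
            linarith
          linarith
      · -- j strictly below jstar: its parent is also outside G, so no input at all
        have hjmem : j ∈ Jlt := Finset.mem_filter.2 ⟨Finset.mem_univ _, hjq⟩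
        have hjle : j ≤ jstar := Finset.le_max' _ _ hjmem
        have hjlt : j < jstar := lt_of_le_of_ne hjle hjj
        have htop : (j : ℕ) + 1 < L.length := by
          have h1 := jstar.isLt
          have h2 : (j : ℕ) < (jstar : ℕ) := hjlt
          omega
        set jp : Fin L.length := ⟨(j : ℕ) + 1, htop⟩ with hjp
        have hjple : jp ≤ jstar := by
          rw [Fin.le_def]
          have h2 : (j : ℕ) < (jstar : ℕ) := hjlt
          simp only [hjp]
          omega
        have hparq : L.get jp < q :=
          lt_of_le_of_lt (by exact_mod_cast List.Pairwise.rel_get_of_le hL hjple) hjstarq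
        have hparnG : vnd R jp ∉ GSet R q L := by
          rw [GSet_vnd]
          exact not_not.2 ⟨rfl, hparq⟩
        have hzero : ∑ a ∈ Finset.univ.filter (fun a => a ∈ GSet R q L),
            (cNet (Vd Γ) L).w a (vnd R j) = 0 := by
          apply Finset.sum_eq_zero
          intro a ha
          have haG : a ∈ GSet R q L := (Finset.mem_filter.1 ha).2
          rw [cNet_w_vnd, dif_pos htop, if_neg]
          intro heq
          rw [heq] at haG
          exact hparnG haG
        rw [hzero, if_pos htop]
        have := hs0 (vnd R j)
        linarith
    · -- n-node
      have hbG2 : ¬ ((∀ u ∈ U, u ∈ R) ∧ q ≤ L.get j) := hbG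
      show (cNet (Vd Γ) L).lam (nnd U j) * s (nnd U j) +
          ∑ a ∈ Finset.univ.filter (fun a => a ∈ GSet R q L), (cNet (Vd Γ) L).w a (nnd U j) <
          (cNet (Vd Γ) L).thr (nnd U j)
      rw [cNet_lam_nnd, cNet_thr_nnd, zero_mul, zero_add]
      -- pick a missing input
      have hbad : ∃ bad, bad ∈ nInputs (β := β) L U j ∧ bad ∉ GSet R q L := by
        by_cases hUR : ∀ u ∈ U, u ∈ R
        · have hjq : L.get j < q := by
            rcases not_and_or.1 hbG2 with h | h
            · exact absurd hUR h
            · exact lt_of_not_ge h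
          refine ⟨vnd R j, ?_, ?_⟩
          · rw [mem_nInputs_iff]
            exact Or.inr ⟨R, fun u hu => hUR u hu, rfl⟩
          · rw [GSet_vnd]
            exact not_not.2 ⟨rfl, hjq⟩
        · push_neg at hUR
          obtain ⟨u₀, hu₀U, hu₀R⟩ := hUR
          exact ⟨Sum.inl u₀, (mem_nInputs_iff L).2 (Or.inl ⟨u₀, hu₀U, rfl⟩), hu₀R⟩
      obtain ⟨bad, hbadIn, hbadG⟩ := hbad
      have hsum : ∑ a ∈ Finset.univ.filter (fun a => a ∈ GSet R q L),
          (cNet (Vd Γ) L).w a (nnd U j) =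
          (((Finset.univ.filter (fun a => a ∈ GSet R q L)).filter
            (fun a => (∃ u ∈ U, a = Sum.inl u) ∨
              (∃ R'' : Set β, U ⊆ R'' ∧ a = vnd R'' j))).card : ℝ) := by
        rw [Finset.sum_congr rfl (fun a _ => cNet_w_nnd (Vd Γ) L a U j)]
        rw [Finset.sum_boole]
      have hsubset : (Finset.univ.filter (fun a => a ∈ GSet R q L)).filter
            (fun a => (∃ u ∈ U, a = Sum.inl u) ∨
              (∃ R'' : Set β, U ⊆ R'' ∧ a = vnd R'' j)) ⊆
          (nInputs (β := β) L U j).erase bad := by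
        intro a ha
        have h1 := Finset.mem_filter.1 ha
        have haG : a ∈ GSet R q L := (Finset.mem_filter.1 h1.1).2
        refine Finset.mem_erase.2 ⟨?_, (mem_nInputs_iff L).2 h1.2⟩
        rintro rfl
        exact hbadG haG
      have hcard : ((Finset.univ.filter (fun a => a ∈ GSet R q L)).filter
            (fun a => (∃ u ∈ U, a = Sum.inl u) ∨
              (∃ R'' : Set β, U ⊆ R'' ∧ a = vnd R'' j))).card <
          (nInputs (β := β) L U j).card :=
        lt_of_le_of_lt (Finset.card_le_card hsubset) (Finset.card_erase_lt_of_mem hbadIn)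
      rw [hsum]
      have := card_nInputs (β := β) L U j
      have hfin : (((Finset.univ.filter (fun a => a ∈ GSet R q L)).filter
            (fun a => (∃ u ∈ U, a = Sum.inl u) ∨
              (∃ R'' : Set β, U ⊆ R'' ∧ a = vnd R'' j))).card : ℝ) <
          ((nInputs (β := β) L U j).card : ℝ) := by exact_mod_cast hcard
      rw [this] at hfin
      push_cast at hfin ⊢
      linarith
  refine ⟨s, hs0, hsb, ?_⟩
  intro hsub
  have hcmem : Sum.inl c ∈ diffuseStar (cNet (Vd Γ) L) s (Sum.inl '' A) :=
    hsub ⟨c, hcB, rfl⟩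
  obtain ⟨m, hm⟩ : ∃ m, Sum.inl c ∈ diffuse (cNet (Vd Γ) L) s (Sum.inl '' A) m := by
    simpa [diffuseStar, Set.mem_iUnion] using hcmem
  have hAG : (Sum.inl '' A : Set (XA β L.length)) ⊆ GSet R q L := by
    rintro _ ⟨x, hx, rfl⟩
    exact hAR x hx
  have := diffuse_subset_invariant hAG hinv m hm
  exact hcR this

end Claim2

end PrevCompletenessProof
namespace PrevCompletenessProof

def budgetsOf {α : Type} : Formula α → List NNReal
  | .atom _ p _ => [p]
  | .neg ψ => budgetsOf ψ
  | .imp ψ χ => budgetsOf ψ ++ budgetsOf χ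

section Glue

variable {β : Type} [Fintype β] {Γ : Set (Formula β)} {L : List NNReal}

lemma glue (hL : L.Pairwise (· ≤ ·)) (ψ : Formula β) (hb : ∀ p ∈ budgetsOf ψ, p ∈ L) :
    PrevSatisfies (cNet (Vd Γ) L) (ψ.map Sum.inl) ↔ evalWith (Vd Γ) ψ := by
  induction ψ with
  | atom A p B =>
    constructor
    · intro hsat
      by_contra hnv
      obtain ⟨s, hs0, hsb, hnsub⟩ := claim2 (Γ := Γ) hL hnv
      exact hnsub (hsat s hs0 hsb)
    · intro hv s hs0 hsb
      rintro _ ⟨b, hbB, rfl⟩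
      exact claim1 hL (vSingleton hv hbB) (hb p (by simp [budgetsOf])) s hs0 hsb
  | neg ψ ih =>
    have h' := ih (fun p hp => hb p (by simpa [budgetsOf] using hp))
    show (¬ _) ↔ (¬ _)
    exact not_congr h'
  | imp ψ χ ihψ ihχ =>
    have hψ := ihψ (fun p hp => hb p (by simp only [budgetsOf, List.mem_append]; exact Or.inl hp))
    have hχ := ihχ (fun p hp => hb p (by simp only [budgetsOf, List.mem_append]; exact Or.inr hp))
    show (_ → _) ↔ (_ → _)
    exact imp_congr hψ hχ

end Glue

end PrevCompletenessProof

/-- Completeness of the logic of preventive marketing: if `⊬ φ` then there is a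
(finite) social network whose agent set extends `𝒜₀` that does not satisfy `φ`. -/
theorem prev_completeness {Agent0 : Type} [Fintype Agent0] (φ : Formula Agent0)
    (h : ¬ PrevDeriv φ) :
    ∃ (Extra : Type) (hF : Fintype Extra) (N : SocialNetwork (Agent0 ⊕ Extra)),
      haveI := hF
      ¬ PrevSatisfies N (Formula.map Sum.inl φ) := by
  classical
  obtain ⟨Γ, hnegφ, hcon, hmax⟩ := PrevCompletenessProof.lindenbaum h
  have htruth := PrevCompletenessProof.truth_lemma hcon hmax
  have hnotφ : ¬ evalWith (PrevCompletenessProof.Vd Γ) φ := by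
    intro hev
    have hφ : PrevCompletenessProof.Derives Γ φ := (htruth φ).1 hev
    have hnφ : PrevCompletenessProof.Derives Γ (Formula.neg φ) :=
      PrevCompletenessProof.derives_of_mem hnegφ
    exact hcon (PrevCompletenessProof.derives_bot_of_both hφ hnφ)
  set L : List NNReal := (PrevCompletenessProof.budgetsOf φ).toFinset.sort (· ≤ ·) with hLdef
  have hL : L.Pairwise (· ≤ ·) := Finset.pairwise_sort _ _
  have hmem : ∀ p ∈ PrevCompletenessProof.budgetsOf φ, p ∈ L :=
    fun p hp => (Finset.mem_sort _).2 (List.mem_toFinset.2 hp)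
  refine ⟨(Set Agent0 × Fin L.length) ⊕ (Set Agent0 × Fin L.length), inferInstance,
    PrevCompletenessProof.cNet (PrevCompletenessProof.Vd Γ) L, ?_⟩
  intro hsat
  exact hnotφ ((PrevCompletenessProof.glue hL φ hmem).1 hsat)
end
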